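/- arXiv:1307.7434 — 7 statements merged into one kernel-verified Lean document; each statement's English description precedes it below -/
import Mathlib

section
/- Let a, b be real numbers with b > 0 and |a| ≤ b, and let x be a nonzero real number such that bx is not an integer multiple of π. Then cos(ax)/sin(bx) = 1/(bx) + Σ_{k=1}^∞ (-1)^{k+1} · cos(akπ/b) · (2bx)/((kπ)² − (bx)²), where the series converges. -/
open Real Filter Finset

/-!
With `α = b x / π`, expand the `2π`-periodic extension of `t ↦ cos (α t)` from `[-π, π]` in a
Fourier series. This extension is continuous, and its Fourier coefficients
`(-1)ⁿ sin (α π) α / (π (α² - n²))` are `O(n⁻²)`, so the series converges to it everywhere.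
Evaluating at `t = a π / b ∈ [-π, π]`, pairing the terms `n` and `-n` and dividing by
`sin (b x) = sin (α π)` gives the expansion.
-/

open Complex in
lemma integral_exp_ofReal_mul_I {θ : ℝ} (hθ : θ ≠ 0) :
    ∫ t in -π..π, cexp (θ * I * t) = 2 * Real.sin (θ * π) / θ := by
  have hθI : (θ : ℂ) * I ≠ 0 := by simpa using hθ
  rw [integral_exp_mul_complex hθI, ofReal_sin, Complex.sin]
  push_cast
  field_simp
  ring_nf
  simp only [I_sq]
  ring

instance : Fact (0 < 2 * π) := ⟨two_pi_pos⟩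

noncomputable def periodicCos (α : ℝ) : C(AddCircle (2 * π), ℂ) :=
  ⟨AddCircle.liftIco (2 * π) (-π) fun t => (cos (α * t) : ℂ),
    AddCircle.liftIco_continuous (by rw [mul_neg, cos_neg]; ring_nf) (by fun_prop)⟩

lemma periodicCos_coe {α t : ℝ} (ht : t ∈ Set.Icc (-π) π) :
    periodicCos α t = cos (α * t) := by
  rw [periodicCos, ContinuousMap.coe_mk]
  rcases ht.2.lt_or_eq with h | rfl
  · exact AddCircle.liftIco_coe_apply ⟨ht.1, by linarith⟩
  · have hπ : ((π : ℝ) : AddCircle (2 * π)) = ((-π : ℝ) : AddCircle (2 * π)) := by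
      rw [← AddCircle.coe_add_period (2 * π) (-π)]; ring_nf
    rw [hπ, show α * π = -(α * -π) by ring, cos_neg]
    exact AddCircle.liftIco_coe_apply ⟨le_rfl, by linarith [pi_pos]⟩

noncomputable def cosFourierCoeff (α : ℝ) (n : ℤ) : ℝ :=
  (-1) ^ n * sin (α * π) * α / (π * (α ^ 2 - n ^ 2))

open Complex in
lemma fourierCoeff_periodicCos {α : ℝ} {n : ℤ} (h₁ : α ≠ n) (h₂ : α ≠ -n) :
    fourierCoeff (periodicCos α) n = cosFourierCoeff α n := by
  have hsub : α - n ≠ 0 := sub_ne_zero.2 h₁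
  have hadd : -(α + n) ≠ 0 := by contrapose! h₂; linarith
  have hexp : ∀ t : ℝ, fourier (-n) (t : AddCircle (-π + 2 * π - -π)) • (Real.cos (α * t) : ℂ) =
      (cexp ((α - n : ℝ) * I * t) + cexp ((-(α + n) : ℝ) * I * t)) / 2 := by
    intro t
    rw [fourier_coe_apply, ofReal_cos, Complex.cos, smul_eq_mul, mul_div_assoc', mul_add,
      ← Complex.exp_add, ← Complex.exp_add]
    congr 3 <;> field_simp <;> push_cast <;> ring
  rw [periodicCos, ContinuousMap.coe_mk, fourierCoeff_liftIco_eq, fourierCoeffOn_eq_integral,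
    intervalIntegral.integral_congr fun t _ => hexp t, intervalIntegral.integral_div,
    intervalIntegral.integral_add
      (Continuous.intervalIntegrable (by fun_prop) _ _)
      (Continuous.intervalIntegrable (by fun_prop) _ _), show -π + 2 * π = π by ring,
    integral_exp_ofReal_mul_I hsub, integral_exp_ofReal_mul_I hadd, sub_mul,
    sin_sub_int_mul_pi, neg_mul, Real.sin_neg, add_mul, sin_add_int_mul_pi, cosFourierCoeff,
    real_smul]
  have hsubC : (α : ℂ) - n ≠ 0 := by exact_mod_cast hsub
  have haddC : (α : ℂ) + n ≠ 0 := by exact_mod_cast neg_ne_zero.1 hadd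
  have hsqC : (α : ℂ) ^ 2 - n ^ 2 ≠ 0 := by rw [sq_sub_sq]; exact mul_ne_zero haddC hsubC
  push_cast
  field_simp
  ring

lemma summable_cosFourierCoeff (α : ℝ) : Summable (cosFourierCoeff α) := by
  have h : Summable fun n : ℤ => ((α - n) * (α + n))⁻¹ := by
    rw [← Complex.summable_ofReal]
    simpa using EisensteinSeries.summable_linear_sub_mul_linear_add α 1 1
  refine Summable.of_norm_bounded (h.abs.mul_left |sin (α * π) * α / π|) fun n => ?_
  rw [Real.norm_eq_abs, ← abs_mul, cosFourierCoeff,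
    show (-1) ^ n * sin (α * π) * α / (π * (α ^ 2 - n ^ 2))
      = (-1) ^ n * (sin (α * π) * α / π * ((α - n) * (α + n))⁻¹) by rw [← div_div]; ring,
    abs_mul, abs_neg_one_zpow, one_mul]

lemma cosFourierCoeff_neg (α : ℝ) (n : ℤ) : cosFourierCoeff α (-n) = cosFourierCoeff α n := by
  simp [cosFourierCoeff, ← inv_zpow]

lemma cosFourierCoeff_zero (α : ℝ) : cosFourierCoeff α 0 = sin (α * π) / (α * π) := by
  rcases eq_or_ne α 0 with rfl | hα
  · simp [cosFourierCoeff]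
  · simp [cosFourierCoeff]
    field_simp

lemma hasSum_cosFourierCoeff_mul_cos {α t : ℝ} (hα : ∀ n : ℤ, α ≠ n) (ht : t ∈ Set.Icc (-π) π) :
    HasSum (fun n : ℤ => cosFourierCoeff α n * cos (n * t)) (cos (α * t)) := by
  have hcoeff : fourierCoeff (periodicCos α) = fun n => (cosFourierCoeff α n : ℂ) :=
    funext fun n => fourierCoeff_periodicCos (hα n) (by exact_mod_cast hα (-n))
  have hsum := has_pointwise_sum_fourier_series_of_summable
    (hcoeff ▸ Complex.summable_ofReal.2 (summable_cosFourierCoeff α)) (t : AddCircle (2 * π))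
  rw [periodicCos_coe ht, hcoeff] at hsum
  convert Complex.reCLM.hasSum hsum using 1
  · ext n
    rw [Complex.reCLM_apply, fourier_coe_apply, smul_eq_mul, Complex.re_ofReal_mul,
      show 2 * π * Complex.I * n * t / (2 * π : ℝ) = (n * t : ℝ) * Complex.I by
        push_cast; field_simp, Complex.exp_ofReal_mul_I_re]
  · exact (Complex.ofReal_re _).symm

lemma hasSum_two_mul_cosFourierCoeff_mul_cos {α t : ℝ} (hα : ∀ n : ℤ, α ≠ n)
    (ht : t ∈ Set.Icc (-π) π) :
    HasSum (fun k : ℕ => 2 * cosFourierCoeff α (k + 1) * cos ((k + 1) * t))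
      (cos (α * t) - sin (α * π) / (α * π)) := by
  have h := (hasSum_cosFourierCoeff_mul_cos hα ht).nat_add_neg
  simp only [cosFourierCoeff_neg, Int.cast_neg, neg_mul, cos_neg] at h
  rw [← hasSum_nat_add_iff' 1, range_one, sum_singleton] at h
  simp only [Nat.cast_zero, Int.cast_zero, zero_mul, cos_zero, mul_one, cosFourierCoeff_zero,
    add_sub_add_right_eq_sub] at h
  exact h.congr_fun fun k => by push_cast; ring

lemma cosFourierCoeff_div_pi (z : ℝ) (n : ℤ) :
    cosFourierCoeff (z / π) n = (-1) ^ n * sin z * z / (z ^ 2 - (n * π) ^ 2) := by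
  rw [cosFourierCoeff, div_mul_cancel₀ _ pi_ne_zero]
  field_simp

theorem cos_div_sin_partial_fraction_general
    (a b x : ℝ) (hb : 0 < b) (hab : |a| ≤ b)
    (hx : ∀ m : ℤ, b * x ≠ m * π) :
    ∃ S : ℝ,
      Tendsto (fun N : ℕ => ∑ k ∈ Finset.range N,
          (-1 : ℝ) ^ ((k + 1) + 1) * Real.cos (a * (k + 1) * π / b) *
            (2 * b * x / (((k + 1 : ℝ) * π) ^ 2 - (b * x) ^ 2)))
        atTop (nhds S) ∧
      Real.cos (a * x) / Real.sin (b * x) = 1 / (b * x) + S := by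
  have hsin : sin (b * x) ≠ 0 := sin_ne_zero_iff.2 fun n h => hx n h.symm
  have hα : ∀ n : ℤ, b * x / π ≠ n := fun n h => hx n (by rw [← h, div_mul_cancel₀ _ pi_ne_zero])
  have ht : a * π / b ∈ Set.Icc (-π) π := by
    rw [Set.mem_Icc, le_div_iff₀ hb, div_le_iff₀ hb]
    constructor <;> nlinarith [abs_le.1 hab, pi_pos]
  have hsum := (hasSum_two_mul_cosFourierCoeff_mul_cos hα ht).div_const (sin (b * x))
  refine ⟨_, (hsum.congr_fun fun k => ?_).tendsto_sum_nat, ?_⟩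
  · rw [cosFourierCoeff_div_pi, ← neg_sub, div_neg,
      show ((k : ℤ) + 1 : ℤ) = ((k + 1 : ℕ) : ℤ) by push_cast; rfl, zpow_natCast,
      show ((k : ℝ) + 1) * (a * π / b) = a * (k + 1) * π / b by ring]
    push_cast
    field_simp
    ring
  · rw [div_mul_cancel₀ _ pi_ne_zero, show b * x / π * (a * π / b) = a * x by field_simp,
      sub_div, div_right_comm, div_self hsin]
    ring

/-- Partial fraction expansion of `cos (a*x) / sin (b*x)`. -/
theorem cos_div_sin_partial_fraction
    (a b x : ℝ) (hb : 0 < b) (hab : |a| ≤ b) (hx0 : x ≠ 0)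
    (hx : ∀ m : ℤ, b * x ≠ m * π) :
    ∃ S : ℝ,
      Tendsto (fun N : ℕ => ∑ k ∈ Finset.range N,
          (-1 : ℝ) ^ ((k + 1) + 1) * Real.cos (a * (k + 1) * π / b) *
            (2 * b * x / (((k + 1 : ℝ) * π) ^ 2 - (b * x) ^ 2)))
        atTop (nhds S) ∧
      Real.cos (a * x) / Real.sin (b * x) = 1 / (b * x) + S :=
  cos_div_sin_partial_fraction_general a b x hb hab hx
end

section
/- For every real a with −π < a < π, the series Σ_{n=1}^∞ (-1)^{n−1} sin(na)/n converges and equals a/2. -/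
open Real Filter Finset

/-!
Dirichlet's test gives convergence: the partial sums of `(-1)^n sin((n+1)a)` telescope after
multiplication by `2 cos(a/2)`, which does not vanish on `(-π, π)`. By Abel's limit theorem the
sum is then the limit as `x → 1⁻` of the power series, which is `Im log(1 + x e^{ia}) / x`, and this
tends to `arg(1 + e^{ia}) = a/2` since `1 + e^{ia} = 2 cos(a/2) e^{ia/2}`.
-/

open Complex (I slitPlane)

theorem two_mul_cos_half_mul_sum_neg_one_pow_mul_sin (a : ℝ) (n : ℕ) :
    2 * cos (a / 2) * ∑ i ∈ range n, (-1) ^ i * sin ((i + 1) * a)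
      = sin (a / 2) - (-1) ^ n * sin ((n + 1 / 2) * a) := by
  induction n with
  | zero => simp [div_eq_inv_mul]
  | succ n ih =>
    have h₁ : ((n : ℝ) + 1 / 2) * a = (n + 1) * a - a / 2 := by ring
    have h₂ : ((n + 1 : ℕ) + 1 / 2 : ℝ) * a = (n + 1) * a + a / 2 := by push_cast; ring
    rw [sum_range_succ, mul_add, ih, h₁, h₂, sin_add, sin_sub, pow_succ]
    ring

theorem abs_sum_neg_one_pow_mul_sin_le {a : ℝ} (ha : cos (a / 2) ≠ 0) (n : ℕ) :
    |∑ i ∈ range n, (-1) ^ i * sin ((i + 1) * a)| ≤ 1 / |cos (a / 2)| := by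
  have key := congrArg abs (two_mul_cos_half_mul_sum_neg_one_pow_mul_sin a n)
  rw [abs_mul, abs_mul, abs_two] at key
  have hbound : |sin (a / 2) - (-1) ^ n * sin ((n + 1 / 2) * a)| ≤ 2 := by
    calc _ ≤ |sin (a / 2)| + |(-1) ^ n * sin ((n + 1 / 2) * a)| := abs_sub _ _
      _ ≤ 1 + 1 := by
        rw [abs_mul, abs_pow, abs_neg, abs_one, one_pow, one_mul]
        exact add_le_add (abs_sin_le_one _) (abs_sin_le_one _)
      _ = 2 := by norm_num
  rw [le_div_iff₀ (abs_pos.mpr ha)]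
  nlinarith

theorem cauchySeq_sum_neg_one_pow_mul_sin_div {a : ℝ} (ha : cos (a / 2) ≠ 0) :
    CauchySeq fun N : ℕ => ∑ n ∈ range N, (-1 : ℝ) ^ n * sin ((n + 1) * a) / (n + 1) := by
  have hanti : Antitone fun n : ℕ => 1 / ((n : ℝ) + 1) := fun _ _ => Nat.one_div_le_one_div
  have := hanti.cauchySeq_series_mul_of_tendsto_zero_of_bounded
    tendsto_one_div_add_atTop_nhds_zero_nat
    fun n => (Real.norm_eq_abs _).trans_le (abs_sum_neg_one_pow_mul_sin_le ha n)
  simpa only [smul_eq_mul, one_div_mul_eq_div] using this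

theorem hasSum_neg_one_pow_mul_sin_div_mul_pow_succ {x : ℝ} (hx : |x| < 1) (a : ℝ) :
    HasSum (fun n : ℕ => (-1) ^ n * sin ((n + 1) * a) / (n + 1) * x ^ (n + 1))
      (Complex.log (1 + x * Complex.exp (a * I))).im := by
  have hz : ‖-((x : ℂ) * Complex.exp (a * I))‖ < 1 := by
    simpa [Complex.norm_exp_ofReal_mul_I] using hx
  have hterm (n : ℕ) : (-((x : ℂ) * Complex.exp (a * I))) ^ (n + 1) / (n + 1)
      = ((-1) ^ (n + 1) * x ^ (n + 1) / (n + 1) : ℝ) * Complex.exp (((n + 1) * a : ℝ) * I) := by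
    rw [neg_pow, mul_pow, ← Complex.exp_nat_mul]
    push_cast
    rw [show ((n : ℂ) + 1) * (a * I) = (n + 1) * a * I by ring]
    ring
  have := (Complex.hasSum_im (Complex.hasSum_taylorSeries_neg_log' hz)).neg
  simp only [sub_neg_eq_add, Complex.neg_im, neg_neg, hterm,
    Complex.im_ofReal_mul, Complex.exp_ofReal_mul_I_im] at this
  exact this.congr_fun fun n => by ring

theorem one_add_exp_mul_I (a : ℝ) :
    1 + Complex.exp (a * I) = (2 * cos (a / 2) : ℝ) * Complex.exp ((a / 2 : ℝ) * I) := by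
  have hsq : Complex.exp (a * I) = Complex.exp ((a / 2 : ℝ) * I) ^ 2 := by
    rw [← Complex.exp_nat_mul]
    push_cast
    ring_nf
  have hinv : Complex.exp ((a / 2 : ℝ) * I) * Complex.exp (-((a / 2 : ℝ) * I)) = 1 := by
    rw [← Complex.exp_add, add_neg_cancel, Complex.exp_zero]
  rw [hsq, Complex.ofReal_mul, Complex.ofReal_cos, Complex.cos]
  push_cast at hinv ⊢
  rw [← neg_mul] at hinv
  linear_combination -hinv

theorem cos_half_pos {a : ℝ} (ha : -π < a) (ha' : a < π) : 0 < cos (a / 2) :=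
  cos_pos_of_mem_Ioo ⟨by linarith, by linarith⟩

theorem arg_one_add_exp_mul_I {a : ℝ} (ha : -π < a) (ha' : a < π) :
    Complex.arg (1 + Complex.exp (a * I)) = a / 2 := by
  have hcos := cos_half_pos ha ha'
  rw [one_add_exp_mul_I, Complex.exp_mul_I,
    Complex.arg_mul_cos_add_sin_mul_I (by positivity) ⟨by linarith, by linarith [pi_pos]⟩]

theorem one_add_exp_mul_I_mem_slitPlane {a : ℝ} (ha : -π < a) (ha' : a < π) :
    1 + Complex.exp (a * I) ∈ slitPlane := by
  have hcos := cos_half_pos ha ha'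
  refine Complex.mem_slitPlane_iff_arg.mpr ⟨?_, ?_⟩
  · rw [arg_one_add_exp_mul_I ha ha']
    linarith [pi_pos]
  · rw [one_add_exp_mul_I]
    exact mul_ne_zero (Complex.ofReal_ne_zero.mpr (by positivity)) (Complex.exp_ne_zero _)

theorem tendsto_im_log_one_add_mul_exp_mul_I_div {a : ℝ} (ha : -π < a) (ha' : a < π) :
    Tendsto (fun x : ℝ => (Complex.log (1 + x * Complex.exp (a * I))).im / x)
      (nhds 1) (nhds (a / 2)) := by
  have hcont : ContinuousAt
      (fun x : ℝ => (Complex.log (1 + x * Complex.exp (a * I))).im / x) 1 := by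
    refine ContinuousAt.div ?_ continuousAt_id one_ne_zero
    refine Complex.continuous_im.continuousAt.comp (ContinuousAt.clog ?_ ?_)
    · fun_prop
    · simpa using one_add_exp_mul_I_mem_slitPlane ha ha'
  simpa [Complex.log_im, arg_one_add_exp_mul_I ha ha'] using hcont.tendsto

/-- For `-π < a < π`, `Σ_{n=1}^∞ (-1)^(n-1) sin (n a) / n = a / 2`. -/
theorem sum_neg_pow_sin_div (a : ℝ) (ha : -π < a) (ha' : a < π) :
    Tendsto (fun N : ℕ => ∑ n ∈ Finset.range N,
        (-1 : ℝ) ^ n * Real.sin ((n + 1) * a) / (n + 1))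
      atTop (nhds (a / 2)) := by
  obtain ⟨l, hl⟩ := cauchySeq_tendsto_of_complete
    (cauchySeq_sum_neg_one_pow_mul_sin_div (cos_half_pos ha ha').ne')
  have habel := Real.tendsto_tsum_powerSeries_nhdsWithin_lt hl
  have hlog : Tendsto (fun x : ℝ => ∑' n : ℕ, (-1) ^ n * sin ((n + 1) * a) / (n + 1) * x ^ n)
      (nhdsWithin 1 (Set.Iio 1)) (nhds (a / 2)) := by
    refine ((tendsto_im_log_one_add_mul_exp_mul_I_div ha ha').mono_left
      nhdsWithin_le_nhds).congr' ?_
    filter_upwards [Ioo_mem_nhdsLT one_pos] with x ⟨hx₀, hx₁⟩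
    have hsum := (hasSum_neg_one_pow_mul_sin_div_mul_pow_succ
      (abs_lt.mpr ⟨by linarith, hx₁⟩) a).div_const x
    refine (hsum.congr_fun fun n => ?_).tsum_eq.symm
    field_simp
    ring
  rwa [tendsto_nhds_unique habel hlog] at hl
end

section
/- Let s be a real number with 0 < s < 1 and let u > 0 be real. Then the improper integral ∫_0^∞ z^{s−1}·cos(uz) dz, understood as the limit as T → ∞ of ∫_0^T z^{s−1}·cos(uz) dz, exists and equals (Γ(s)/u^s)·cos(sπ/2). -/
/-!
For `z > 0`, `Γ(1-s) z^(s-1) = ∫_0^∞ t^(-s) e^(-tz) dt`. Substituting this into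
`∫_0^T z^(s-1) cos(uz) dz` and exchanging the integrals leaves the elementary inner integral
`∫_0^T e^(-tz) cos(uz) dz`; its boundary term at `T` contributes `O(T^(s-1))`, so the limit is
`∫_0^∞ t^(1-s)/(t²+u²) dt / Γ(1-s)`. Writing `1/(t²+u²) = ∫_0^∞ e^(-(t²+u²)y) dy` and exchanging
again gives `Γ(s/2)Γ(1-s/2) u^(-s)/2 = π u^(-s)/(2 sin(sπ/2))`, and the reflection formula turns
this into `Γ(s)Γ(1-s) cos(sπ/2) u^(-s)`.
-/

open Real Filter intervalIntegral

open Set MeasureTheory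

lemma integrableOn_rpow_mul_exp_neg_mul {a r : ℝ} (ha : -1 < a) (hr : 0 < r) :
    IntegrableOn (fun t : ℝ => t ^ a * exp (-(r * t))) (Ioi 0) := by
  simpa [rpow_one] using integrableOn_rpow_mul_exp_neg_mul_rpow ha one_pos hr

lemma integral_rpow_neg_mul_exp_neg_mul {s z : ℝ} (hs : s < 1) (hz : 0 < z) :
    ∫ t in Ioi (0 : ℝ), t ^ (-s) * exp (-(t * z)) = Gamma (1 - s) * z ^ (s - 1) := by
  have h := integral_rpow_mul_exp_neg_mul_Ioi (sub_pos.2 hs) hz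
  rw [sub_sub_cancel_left, one_div, inv_rpow hz.le, ← rpow_neg hz.le, neg_sub] at h
  simp_rw [mul_comm _ z]
  rw [h, mul_comm]

lemma integral_exp_neg_mul_mul_cos {t u : ℝ} (h : t ^ 2 + u ^ 2 ≠ 0) (T : ℝ) :
    ∫ z in (0 : ℝ)..T, exp (-(t * z)) * cos (u * z) =
      (t + exp (-(t * T)) * (u * sin (u * T) - t * cos (u * T))) / (t ^ 2 + u ^ 2) := by
  have hderiv (z : ℝ) : HasDerivAt
      (fun z => exp (-(t * z)) * (u * sin (u * z) - t * cos (u * z)) / (t ^ 2 + u ^ 2))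
      (exp (-(t * z)) * cos (u * z)) z := by
    have hlin (c : ℝ) : HasDerivAt (fun z => c * z) c z := by
      simpa using (hasDerivAt_id z).const_mul c
    refine ((((hlin t).neg.exp).mul (((hlin u).sin.const_mul u).sub
      ((hlin u).cos.const_mul t))).div_const (t ^ 2 + u ^ 2)).congr_deriv ?_
    simp only [Pi.sub_apply, Pi.neg_apply]
    field_simp
    ring
  rw [integral_eq_sub_of_hasDerivAt (fun z _ => hderiv z)
    ((by fun_prop : Continuous _).intervalIntegrable _ _)]
  simp only [mul_zero, neg_zero, exp_zero, sin_zero, cos_zero]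
  ring

lemma abs_mul_sin_sub_mul_cos_mul_le (t u x : ℝ) :
    |u * sin x - t * cos x| * u ≤ t ^ 2 + u ^ 2 := by
  have hlag : (u * sin x - t * cos x) ^ 2 + (u * cos x + t * sin x) ^ 2 = t ^ 2 + u ^ 2 := by
    linear_combination (t ^ 2 + u ^ 2) * sin_sq_add_cos_sq x
  nlinarith [sq_abs (u * sin x - t * cos x), sq_nonneg (|u * sin x - t * cos x| - u),
    sq_nonneg (u * cos x + t * sin x)]

lemma Real.Gamma_mul_Gamma_one_sub_mul_cos {s : ℝ} (hcos : cos (s * π / 2) ≠ 0) :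
    Gamma s * Gamma (1 - s) * cos (s * π / 2) = π / (2 * sin (s * π / 2)) := by
  rw [Gamma_mul_Gamma_one_sub, show π * s = 2 * (s * π / 2) by ring, sin_two_mul]
  generalize s * π / 2 = x at *
  rcases eq_or_ne (sin x) 0 with hsin | hsin
  · simp [hsin]
  · field_simp

lemma integral_mul_exp_neg_mul_Ioi (a : ℝ) {c : ℝ} (hc : 0 < c) :
    ∫ y in Ioi (0 : ℝ), a * exp (-(c * y)) = a / c := by
  rw [MeasureTheory.integral_const_mul, div_eq_mul_inv]
  simpa [neg_mul] using congrArg (a * ·) (integral_exp_mul_Ioi (neg_lt_zero.2 hc) 0)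

section

variable {s u : ℝ}

lemma integral_rpow_mul_exp_neg_sq_add_sq_mul (hs : s < 2) {y : ℝ} (hy : 0 < y) :
    ∫ t in Ioi (0 : ℝ), t ^ (1 - s) * exp (-((t ^ 2 + u ^ 2) * y)) =
      Gamma (1 - s / 2) / 2 * (y ^ (s / 2 - 1) * exp (-(u ^ 2 * y))) := by
  have h := integral_rpow_mul_exp_neg_mul_rpow two_pos (by linarith : -1 < 1 - s) hy
  rw [show -(1 - s + 1) / 2 = s / 2 - 1 by ring, show (1 - s + 1) / 2 = 1 - s / 2 by ring] at h
  calc _ = (∫ t in Ioi (0 : ℝ), t ^ (1 - s) * exp (-y * t ^ (2 : ℝ))) * exp (-(u ^ 2 * y)) := by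
        rw [← MeasureTheory.integral_mul_const]
        refine setIntegral_congr_fun measurableSet_Ioi fun t _ => ?_
        rw [rpow_two, mul_assoc, ← exp_add]
        ring_nf
    _ = _ := by rw [h]; ring

lemma integrable_rpow_mul_exp_neg_sq_add_sq_mul (hs0 : 0 < s) (hs2 : s < 2) (hu : 0 < u) :
    Integrable (Function.uncurry fun t y : ℝ => t ^ (1 - s) * exp (-((t ^ 2 + u ^ 2) * y)))
      ((volume.restrict (Ioi 0)).prod (volume.restrict (Ioi 0))) := by
  refine (integrable_prod_iff' (by fun_prop)).2 ⟨?_, ?_⟩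
  · refine (ae_restrict_iff' measurableSet_Ioi).2 (Eventually.of_forall fun y (hy : 0 < y) => ?_)
    refine IntegrableOn.congr_fun ((integrableOn_rpow_mul_exp_neg_mul_rpow
      (by linarith : -1 < 1 - s) two_pos hy).mul_const (exp (-(u ^ 2 * y)))) (fun t _ => ?_)
      measurableSet_Ioi
    simp only [Function.uncurry_apply_pair]
    rw [rpow_two, mul_assoc, ← exp_add]
    ring_nf
  · refine (((integrableOn_rpow_mul_exp_neg_mul (by linarith : -1 < s / 2 - 1)
      (pow_pos hu 2)).const_mul (Gamma (1 - s / 2) / 2))).congr ?_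
    refine (ae_restrict_iff' measurableSet_Ioi).2 (Eventually.of_forall fun y (hy : 0 < y) => ?_)
    simp only [Function.uncurry_apply_pair]
    rw [← integral_rpow_mul_exp_neg_sq_add_sq_mul hs2 hy]
    refine (setIntegral_congr_fun measurableSet_Ioi fun t (ht : 0 < t) => ?_).symm
    rw [norm_of_nonneg (by positivity)]

lemma integrableOn_rpow_div_sq_add_sq (hs0 : 0 < s) (hs2 : s < 2) (hu : 0 < u) :
    IntegrableOn (fun t : ℝ => t ^ (1 - s) / (t ^ 2 + u ^ 2)) (Ioi 0) :=
  (integrable_rpow_mul_exp_neg_sq_add_sq_mul hs0 hs2 hu).integral_prod_left.congr <|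
    Eventually.of_forall fun t => by
      simp only [Function.uncurry_apply_pair]
      exact integral_mul_exp_neg_mul_Ioi _ (by positivity)

lemma integral_rpow_div_sq_add_sq (hs0 : 0 < s) (hs2 : s < 2) (hu : 0 < u) :
    ∫ t in Ioi (0 : ℝ), t ^ (1 - s) / (t ^ 2 + u ^ 2) = π / (2 * sin (s * π / 2)) * u ^ (-s) := by
  calc _ = ∫ t in Ioi (0 : ℝ), ∫ y in Ioi (0 : ℝ), t ^ (1 - s) * exp (-((t ^ 2 + u ^ 2) * y)) :=
        integral_congr_ae <| Eventually.of_forall fun _ =>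
          (integral_mul_exp_neg_mul_Ioi _ (by positivity)).symm
    _ = ∫ y in Ioi (0 : ℝ), ∫ t in Ioi (0 : ℝ), t ^ (1 - s) * exp (-((t ^ 2 + u ^ 2) * y)) :=
        integral_integral_swap (integrable_rpow_mul_exp_neg_sq_add_sq_mul hs0 hs2 hu)
    _ = ∫ y in Ioi (0 : ℝ), Gamma (1 - s / 2) / 2 * (y ^ (s / 2 - 1) * exp (-(u ^ 2 * y))) :=
        setIntegral_congr_fun measurableSet_Ioi fun y hy =>
          integral_rpow_mul_exp_neg_sq_add_sq_mul hs2 hy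
    _ = Gamma (s / 2) * Gamma (1 - s / 2) / 2 * (u ^ 2)⁻¹ ^ (s / 2) := by
        rw [MeasureTheory.integral_const_mul,
          integral_rpow_mul_exp_neg_mul_Ioi (by linarith) (pow_pos hu 2), one_div]
        ring
    _ = π / (2 * sin (s * π / 2)) * u ^ (-s) := by
        rw [Gamma_mul_Gamma_one_sub, inv_rpow (by positivity), ← rpow_natCast, ← rpow_mul hu.le,
          ← rpow_neg hu.le, show π * (s / 2) = s * π / 2 by ring,
          show ((2 : ℕ) : ℝ) * (s / 2) = s by push_cast; ring]
        ring

lemma Gamma_one_sub_mul_integral_rpow_mul (hs0 : 0 < s) (hs1 : s < 1) {f : ℝ → ℝ}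
    (hf : Continuous f) {T : ℝ} (hT : 0 ≤ T) :
    Gamma (1 - s) * ∫ z in (0 : ℝ)..T, z ^ (s - 1) * f z =
      ∫ t in Ioi (0 : ℝ), t ^ (-s) * ∫ z in (0 : ℝ)..T, exp (-(t * z)) * f z := by
  have hnorm {z : ℝ} (hz : 0 < z) :
      ∫ t in Ioi (0 : ℝ), ‖t ^ (-s) * exp (-(t * z)) * f z‖ =
        Gamma (1 - s) * (z ^ (s - 1) * ‖f z‖) := by
    rw [← mul_assoc, ← integral_rpow_neg_mul_exp_neg_mul hs1 hz,
      ← MeasureTheory.integral_mul_const]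
    refine setIntegral_congr_fun measurableSet_Ioi fun t (ht : 0 < t) => ?_
    rw [norm_mul, norm_of_nonneg (by positivity)]
  have hint : Integrable (Function.uncurry fun z t : ℝ => t ^ (-s) * exp (-(t * z)) * f z)
      ((volume.restrict (Ioc 0 T)).prod (volume.restrict (Ioi 0))) := by
    have hmeas := hf.measurable
    refine (integrable_prod_iff (by fun_prop)).2 ⟨?_, ?_⟩
    · refine (ae_restrict_iff' measurableSet_Ioc).2 (Eventually.of_forall fun z hz => ?_)
      simpa only [Function.uncurry_apply_pair, mul_comm _ z] using
        (integrableOn_rpow_mul_exp_neg_mul (by linarith : -1 < -s) hz.1).mul_const (f z)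
    · have hbound :
          IntegrableOn (fun z : ℝ => Gamma (1 - s) * (z ^ (s - 1) * ‖f z‖)) (Ioc 0 T) := by
        have h := (intervalIntegrable_iff_integrableOn_Ioc_of_le hT).1
          ((intervalIntegrable_rpow' (by linarith : -1 < s - 1)).mul_continuousOn
            hf.norm.continuousOn)
        exact h.const_mul _
      refine hbound.congr ((ae_restrict_iff' measurableSet_Ioc).2
        (Eventually.of_forall fun z hz => (hnorm hz.1).symm))
  calc _ = ∫ z in Ioc 0 T, ∫ t in Ioi (0 : ℝ), t ^ (-s) * exp (-(t * z)) * f z := by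
        rw [integral_of_le hT, ← MeasureTheory.integral_const_mul]
        refine setIntegral_congr_fun measurableSet_Ioc fun z hz => ?_
        rw [MeasureTheory.integral_mul_const, integral_rpow_neg_mul_exp_neg_mul hs1 hz.1]
        ring
    _ = ∫ t in Ioi (0 : ℝ), ∫ z in Ioc 0 T, t ^ (-s) * exp (-(t * z)) * f z :=
        integral_integral_swap hint
    _ = _ := by
        refine setIntegral_congr_fun measurableSet_Ioi fun t _ => ?_
        rw [integral_of_le hT, ← MeasureTheory.integral_const_mul]
        simp only [mul_assoc]

lemma norm_rpow_neg_mul_exp_mul_sin_sub_cos_div_le (hu : 0 < u) {t : ℝ} (ht : 0 < t) (T : ℝ) :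
    ‖t ^ (-s) * exp (-(t * T)) * (u * sin (u * T) - t * cos (u * T)) / (t ^ 2 + u ^ 2)‖ ≤
      u⁻¹ * (t ^ (-s) * exp (-(T * t))) := by
  have hd : 0 < t ^ 2 + u ^ 2 := by positivity
  have hA : 0 ≤ t ^ (-s) * exp (-(t * T)) := by positivity
  rw [norm_div, norm_mul, norm_of_nonneg hA, norm_of_nonneg hd.le, norm_eq_abs, mul_comm T,
    div_le_iff₀ hd]
  calc _ = u⁻¹ * (t ^ (-s) * exp (-(t * T))) * (|u * sin (u * T) - t * cos (u * T)| * u) := by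
        field_simp
    _ ≤ _ := by gcongr; exact abs_mul_sin_sub_mul_cos_mul_le t u (u * T)

lemma integrableOn_rpow_neg_mul_exp_mul_sin_sub_cos_div (hs1 : s < 1) (hu : 0 < u) {T : ℝ}
    (hT : 0 < T) :
    IntegrableOn (fun t : ℝ => t ^ (-s) * exp (-(t * T)) * (u * sin (u * T) - t * cos (u * T)) /
      (t ^ 2 + u ^ 2)) (Ioi 0) :=
  Integrable.mono' ((integrableOn_rpow_mul_exp_neg_mul (by linarith) hT).const_mul u⁻¹)
    (by fun_prop : Measurable _).aestronglyMeasurable ((ae_restrict_iff' measurableSet_Ioi).2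
      (Eventually.of_forall fun _ ht => norm_rpow_neg_mul_exp_mul_sin_sub_cos_div_le hu ht T))

lemma tendsto_integral_rpow_neg_mul_exp_mul_sin_sub_cos_div (hs1 : s < 1) (hu : 0 < u) :
    Tendsto (fun T : ℝ => ∫ t in Ioi (0 : ℝ), t ^ (-s) * exp (-(t * T)) *
      (u * sin (u * T) - t * cos (u * T)) / (t ^ 2 + u ^ 2)) atTop (nhds 0) := by
  have hbound : ∀ᶠ T in atTop, ‖∫ t in Ioi (0 : ℝ), t ^ (-s) * exp (-(t * T)) *
      (u * sin (u * T) - t * cos (u * T)) / (t ^ 2 + u ^ 2)‖ ≤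
        u⁻¹ * Gamma (1 - s) * T ^ (s - 1) := by
    filter_upwards [eventually_gt_atTop 0] with T hT
    calc _ ≤ ∫ t in Ioi (0 : ℝ), u⁻¹ * (t ^ (-s) * exp (-(T * t))) :=
          norm_integral_le_of_norm_le
            ((integrableOn_rpow_mul_exp_neg_mul (by linarith) hT).const_mul u⁻¹)
            ((ae_restrict_iff' measurableSet_Ioi).2 (Eventually.of_forall fun _ ht =>
              norm_rpow_neg_mul_exp_mul_sin_sub_cos_div_le hu ht T))
      _ = u⁻¹ * Gamma (1 - s) * T ^ (s - 1) := by
          simp_rw [mul_comm T]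
          rw [MeasureTheory.integral_const_mul, integral_rpow_neg_mul_exp_neg_mul hs1 hT,
            mul_assoc]
  have hdecay : Tendsto (fun T : ℝ => u⁻¹ * Gamma (1 - s) * T ^ (s - 1)) atTop (nhds 0) := by
    simpa [neg_sub] using
      (tendsto_rpow_neg_atTop (sub_pos.2 hs1)).const_mul (u⁻¹ * Gamma (1 - s))
  exact squeeze_zero_norm' hbound hdecay

lemma Gamma_one_sub_mul_integral_rpow_mul_cos (hs0 : 0 < s) (hs1 : s < 1) (hu : 0 < u) {T : ℝ}
    (hT : 0 < T) :
    Gamma (1 - s) * ∫ z in (0 : ℝ)..T, z ^ (s - 1) * cos (u * z) =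
      (∫ t in Ioi (0 : ℝ), t ^ (1 - s) / (t ^ 2 + u ^ 2)) +
        ∫ t in Ioi (0 : ℝ), t ^ (-s) * exp (-(t * T)) * (u * sin (u * T) - t * cos (u * T)) /
          (t ^ 2 + u ^ 2) := by
  rw [Gamma_one_sub_mul_integral_rpow_mul hs0 hs1 (by fun_prop) hT.le,
    ← integral_add (integrableOn_rpow_div_sq_add_sq hs0 (by linarith) hu)
      (integrableOn_rpow_neg_mul_exp_mul_sin_sub_cos_div hs1 hu hT)]
  refine setIntegral_congr_fun measurableSet_Ioi fun t (ht : 0 < t) => ?_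
  rw [integral_exp_neg_mul_mul_cos (by positivity),
    show t ^ (1 - s) = t * t ^ (-s) by rw [sub_eq_add_neg, rpow_add ht, rpow_one]]
  ring

end

/-- Euler: `∫_0^∞ z^(s-1) cos (u z) dz = Γ(s)/u^s · cos (sπ/2)` (as an improper
limit of integrals over `[0, T]`) for `0 < s < 1` and `u > 0`. -/
theorem integral_rpow_mul_cos (s u : ℝ) (hs0 : 0 < s) (hs1 : s < 1) (hu : 0 < u) :
    Tendsto (fun T : ℝ => ∫ z in (0 : ℝ)..T, z ^ (s - 1) * Real.cos (u * z))
      atTop (nhds (Real.Gamma s / u ^ s * Real.cos (s * π / 2))) := by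
  have hΓ : Gamma (1 - s) ≠ 0 := (Gamma_pos_of_pos (sub_pos.2 hs1)).ne'
  have hcos : cos (s * π / 2) ≠ 0 := by
    refine (cos_pos_of_mem_Ioo ⟨?_, ?_⟩).ne' <;> nlinarith [pi_pos]
  have hlim := (tendsto_const_nhds.add (tendsto_integral_rpow_neg_mul_exp_mul_sin_sub_cos_div hs1
    hu)).congr' <| (eventually_gt_atTop 0).mono fun T hT =>
      (Gamma_one_sub_mul_integral_rpow_mul_cos hs0 hs1 hu hT).symm
  convert hlim.const_mul (Gamma (1 - s))⁻¹ using 2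
  · rw [inv_mul_cancel_left₀ hΓ]
  · rw [add_zero, integral_rpow_div_sq_add_sq hs0 (by linarith) hu,
      ← Gamma_mul_Gamma_one_sub_mul_cos hcos, rpow_neg hu.le]
    field_simp
end

section
/- Let k and l be positive integers with k < l, and let s be a real number with 0 < s < 1. Then Σ_{n=0}^∞ (1/((2n+1)l − k)^s − 1/((2n+1)l + k)^s) = ((π/l)^s/(sin(sπ/2)·Γ(s))) · Σ_{n=1}^∞ (-1)^{n+1}·sin(nkπ/l)/n^{1−s}, where the series on the right converges (conditionally) and the series on the left converges absolutely. -/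
open Real Filter Finset
open scoped Topology

/-!
With `a = (l - k) / (2l)` the left-hand series is `2 (2l)^(-s)` times the odd Hurwitz zeta series
`∑ ((n + a)^(-s) - (n + 1 - a)^(-s)) / 2`, and the right-hand series is the sine zeta series
`∑ sin(2πan) n^(-w)` at `w = 1 - s`. These Dirichlet series represent `hurwitzZetaOdd a` and
`sinZeta a` a priori only for real part `> 1`. The first one, and the second after summation by
parts (the partial sums of `sin(2πan)` are bounded), are series of holomorphic functions
converging locally uniformly on `re > 0`, so by the identity theorem they represent the two
functions there too. The functional equation
`sinZeta a (1 - s) = 2 (2π)^(-s) Γ(s) sin(πs/2) hurwitzZetaOdd a s` then gives the theorem.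
-/

open Complex in
theorem norm_ofReal_cpow_neg_sub_le {x y : ℝ} (hx : 0 < x) (hxy : x ≤ y) {w : ℂ}
    (hw : 0 ≤ w.re) :
    ‖(x : ℂ) ^ (-w) - (y : ℂ) ^ (-w)‖ ≤ ‖w‖ * x ^ (-w.re - 1) * (y - x) := by
  have hderiv : ∀ t ∈ Set.Icc x y, HasDerivWithinAt (fun u : ℝ => (u : ℂ) ^ (-w))
      (-w * (t : ℂ) ^ (-w - 1)) (Set.Icc x y) t := fun t ht => by
    have ht0 : 0 < t := hx.trans_le ht.1
    simpa using ((hasDerivAt_id (t : ℂ)).cpow_const (c := -w)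
      (by simp [mem_slitPlane_iff, ht0])).comp_ofReal.hasDerivWithinAt
  have hbound : ∀ t ∈ Set.Icc x y, ‖-w * (t : ℂ) ^ (-w - 1)‖ ≤ ‖w‖ * x ^ (-w.re - 1) :=
    fun t ht => by
      rw [norm_mul, norm_neg, norm_cpow_eq_rpow_re_of_pos (hx.trans_le ht.1)]
      gcongr
      simpa using Real.rpow_le_rpow_of_nonpos hx ht.1 (by linarith : -w.re - 1 ≤ 0)
  have := (convex_Icc x y).norm_image_sub_le_of_norm_hasDerivWithin_le hderiv hbound
    (Set.left_mem_Icc.mpr hxy) (Set.right_mem_Icc.mpr hxy)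
  rwa [norm_sub_rev, Real.norm_eq_abs, abs_of_nonneg (sub_nonneg.mpr hxy)] at this

theorem summable_nat_add_one_rpow {p : ℝ} (hp : p < -1) :
    Summable (fun n : ℕ => ((n : ℝ) + 1) ^ p) := by
  simpa using (summable_nat_add_iff 1).mpr (Real.summable_nat_rpow.mpr hp)

theorem differentiableOn_tsum_of_norm_le_mul_rpow {f : ℕ → ℂ → ℂ}
    (hf : ∀ n, DifferentiableOn ℂ (f n) {z | 0 < z.re}) {B : ℂ → ℝ}
    (hB : ContinuousOn B {z | 0 < z.re})
    (hfB : ∀ n z, 0 < z.re → ‖f n z‖ ≤ B z * ((n : ℝ) + 1) ^ (-z.re - 1)) :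
    DifferentiableOn ℂ (fun z => ∑' n, f n z) {z | 0 < z.re} := by
  intro z₀ hz₀
  set δ := z₀.re / 2 with hδ_def
  have hδ : 0 < δ := half_pos hz₀
  have hre : ∀ z ∈ Metric.closedBall z₀ δ, δ ≤ z.re := fun z hz => by
    have := (Complex.abs_re_le_norm (z - z₀)).trans (mem_closedBall_iff_norm.mp hz)
    rw [Complex.sub_re, abs_le] at this
    linarith [this.1]
  obtain ⟨M, hM⟩ := (isCompact_closedBall z₀ δ).exists_bound_of_continuousOn
    (hB.mono fun z hz => hδ.trans_le (hre z hz))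
  have hball : DifferentiableOn ℂ (fun z => ∑' n, f n z) (Metric.ball z₀ δ) := by
    refine Complex.differentiableOn_tsum_of_summable_norm
      ((summable_nat_add_one_rpow (by linarith : -δ - 1 < -1)).mul_left M)
      (fun n => (hf n).mono fun z hz => ?_) Metric.isOpen_ball fun n z hz => ?_
    · exact hδ.trans_le (hre z (Metric.ball_subset_closedBall hz))
    · have hz' := Metric.ball_subset_closedBall hz
      calc ‖f n z‖ ≤ B z * ((n : ℝ) + 1) ^ (-z.re - 1) := hfB n z (hδ.trans_le (hre z hz'))
        _ ≤ M * ((n : ℝ) + 1) ^ (-δ - 1) := by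
          refine mul_le_mul ((le_abs_self _).trans (hM z hz'))
            (Real.rpow_le_rpow_of_exponent_le (by simp) (by linarith [hre z hz']))
            (by positivity) ((abs_nonneg _).trans (hM z hz'))
  exact (hball.differentiableAt (Metric.ball_mem_nhds z₀ hδ)).differentiableWithinAt

theorem eqOn_re_gt_of_eqOn_re_gt {f g : ℂ → ℂ} {σ τ : ℝ}
    (hf : DifferentiableOn ℂ f {z | σ < z.re}) (hg : DifferentiableOn ℂ g {z | σ < z.re})
    (hfg : ∀ z : ℂ, τ < z.re → f z = g z) :
    Set.EqOn f g {z | σ < z.re} := by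
  have hopen : ∀ c : ℝ, IsOpen {z : ℂ | c < z.re} :=
    fun c => isOpen_lt continuous_const Complex.continuous_re
  set z₀ : ℂ := ((max σ τ + 1 : ℝ) : ℂ)
  have hz₀ : ∀ c ≤ max σ τ, z₀ ∈ {z : ℂ | c < z.re} := fun c hc => by
    show c < z₀.re; simp only [z₀, Complex.ofReal_re]; linarith
  refine (hf.analyticOnNhd (hopen σ)).eqOn_of_preconnected_of_eventuallyEq
    (hg.analyticOnNhd (hopen σ)) (convex_halfSpace_re_gt σ).isPreconnected
    (hz₀ σ (le_max_left σ τ)) ?_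
  filter_upwards [(hopen τ).mem_nhds (hz₀ τ (le_max_right σ τ))] with z hz using hfg z hz

theorem exists_abs_sum_sin_le {θ : ℝ} (h0 : 0 < θ) (h2π : θ < 2 * π) :
    ∃ C, ∀ N : ℕ, |∑ n ∈ range N, Real.sin ((n + 1) * θ)| ≤ C := by
  set z := Complex.exp (θ * Complex.I)
  have hz : ‖z‖ = 1 := Complex.norm_exp_ofReal_mul_I θ
  have hz1 : z ≠ 1 := fun h => by
    obtain ⟨m, hm⟩ := Complex.exp_eq_one_iff.mp h
    have hθ : θ = m * (2 * π) := by simpa using congrArg Complex.im hm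
    rcases le_or_gt m 0 with hm0 | hm0
    · have : (m : ℝ) ≤ 0 := by exact_mod_cast hm0
      nlinarith [pi_pos]
    · have : (1 : ℝ) ≤ m := by exact_mod_cast hm0
      nlinarith [pi_pos]
  refine ⟨2 / ‖z - 1‖, fun N => ?_⟩
  have him : ∑ n ∈ range N, Real.sin ((n + 1) * θ) = (z * ∑ n ∈ range N, z ^ n).im := by
    rw [mul_sum, Complex.im_sum]
    refine sum_congr rfl fun n _ => ?_
    rw [← pow_succ', ← Complex.exp_nat_mul, ← mul_assoc, ← Complex.ofReal_natCast,
      ← Complex.ofReal_mul, Complex.exp_ofReal_mul_I_im]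
    push_cast
    ring_nf
  calc |∑ n ∈ range N, Real.sin ((n + 1) * θ)|
      ≤ ‖z * ∑ n ∈ range N, z ^ n‖ := him ▸ Complex.abs_im_le_norm _
    _ = ‖z ^ N - 1‖ / ‖z - 1‖ := by rw [geom_sum_eq hz1, norm_mul, hz, one_mul, norm_div]
    _ ≤ 2 / ‖z - 1‖ := by
      gcongr
      calc ‖z ^ N - 1‖ ≤ ‖z ^ N‖ + ‖(1 : ℂ)‖ := norm_sub_le _ _
        _ = 2 := by rw [norm_pow, hz, one_pow, norm_one]; norm_num

section DirichletSeriesByParts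

variable {c : ℕ → ℂ} {C : ℝ}

noncomputable def dirichletSeriesByParts (c : ℕ → ℂ) (w : ℂ) : ℂ :=
  ∑' n : ℕ, (∑ i ∈ range (n + 1), c i) * (((n : ℂ) + 1) ^ (-w) - ((n : ℂ) + 2) ^ (-w))

theorem norm_dirichletSeriesByParts_term_le (hc : ∀ N, ‖∑ i ∈ range N, c i‖ ≤ C) (n : ℕ)
    {w : ℂ} (hw : 0 ≤ w.re) :
    ‖(∑ i ∈ range (n + 1), c i) * (((n : ℂ) + 1) ^ (-w) - ((n : ℂ) + 2) ^ (-w))‖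
      ≤ C * ‖w‖ * ((n : ℝ) + 1) ^ (-w.re - 1) := by
  have h := norm_ofReal_cpow_neg_sub_le (x := n + 1) (y := n + 2) (by positivity)
    (by linarith) hw
  push_cast at h
  rw [norm_mul, mul_assoc]
  exact mul_le_mul (hc _) (h.trans_eq (by ring)) (norm_nonneg _)
    ((norm_nonneg _).trans (hc 0))

theorem differentiableOn_dirichletSeriesByParts (hc : ∀ N, ‖∑ i ∈ range N, c i‖ ≤ C) :
    DifferentiableOn ℂ (dirichletSeriesByParts c) {w | 0 < w.re} := by
  refine differentiableOn_tsum_of_norm_le_mul_rpow (B := fun w => C * ‖w‖)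
    (fun n => ?_) (by fun_prop) fun n w hw => norm_dirichletSeriesByParts_term_le hc n hw.le
  have h1 : (n : ℂ) + 1 ≠ 0 := by exact_mod_cast n.succ_ne_zero
  have h2 : (n : ℂ) + 2 ≠ 0 := by exact_mod_cast (n + 1).succ_ne_zero
  exact (((differentiable_neg.const_cpow (Or.inl h1)).sub
    (differentiable_neg.const_cpow (Or.inl h2))).const_mul _).differentiableOn

theorem tendsto_sum_mul_cpow_dirichletSeriesByParts (hc : ∀ N, ‖∑ i ∈ range N, c i‖ ≤ C)
    {w : ℂ} (hw : 0 < w.re) :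
    Tendsto (fun N => ∑ n ∈ range N, c n * ((n : ℂ) + 1) ^ (-w)) atTop
      (𝓝 (dirichletSeriesByParts c w)) := by
  set b : ℕ → ℂ := fun n => ((n : ℂ) + 1) ^ (-w)
  have hbn : ∀ n : ℕ, ‖b n‖ = ((n : ℝ) + 1) ^ (-w.re) := fun n => by
    simpa using Complex.norm_cpow_eq_rpow_re_of_pos (x := n + 1) (by positivity) (-w)
  have hby_parts : ∀ N, ∑ n ∈ range (N + 1), c n * b n
      = b N * ∑ i ∈ range (N + 1), c i
        + ∑ n ∈ range N, (∑ i ∈ range (n + 1), c i) * (b n - b (n + 1)) := fun N => by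
    have := sum_range_by_parts b c (N + 1)
    simp only [add_tsub_cancel_right, smul_eq_mul] at this
    simp_rw [mul_comm (c _), this, sub_eq_add_neg, ← sum_neg_distrib]
    congr 1
    exact sum_congr rfl fun n _ => by ring
  have hboundary : Tendsto (fun N => b N * ∑ i ∈ range (N + 1), c i) atTop (𝓝 0) := by
    have hdecay : Tendsto (fun N : ℕ => C * ((N : ℝ) + 1) ^ (-w.re)) atTop (𝓝 0) := by
      simpa using ((tendsto_rpow_neg_atTop hw).comp
        (tendsto_atTop_add_const_right _ 1 tendsto_natCast_atTop_atTop)).const_mul C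
    refine squeeze_zero_norm (fun N => ?_) hdecay
    rw [norm_mul, hbn, mul_comm]
    exact mul_le_mul_of_nonneg_right (hc _) (by positivity)
  have hsum : Tendsto (fun N => ∑ n ∈ range N, (∑ i ∈ range (n + 1), c i) * (b n - b (n + 1)))
      atTop (𝓝 (dirichletSeriesByParts c w)) := by
    have hb : ∀ n : ℕ, b (n + 1) = ((n : ℂ) + 2) ^ (-w) := fun n => by
      simp only [b]; push_cast; ring_nf
    simp_rw [hb]
    exact (Summable.of_norm_bounded ((summable_nat_add_one_rpow
      (by linarith : -w.re - 1 < -1)).mul_left (C * ‖w‖))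
      fun n => norm_dirichletSeriesByParts_term_le hc n hw.le).hasSum.tendsto_sum_nat
  change Tendsto (fun N => ∑ n ∈ range N, c n * b n) atTop _
  rw [← tendsto_add_atTop_iff_nat 1]
  simpa only [hby_parts, zero_add] using hboundary.add hsum

end DirichletSeriesByParts

open HurwitzZeta

theorem norm_hurwitzZetaOdd_term_le {a : ℝ} (ha : 0 < a) (ha' : a ≤ 1 / 2) {s : ℂ}
    (hs : 0 ≤ s.re) (n : ℕ) :
    ‖(1 / ((n : ℂ) + a) ^ s - 1 / ((n : ℂ) + 1 - a) ^ s) / 2‖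
      ≤ ‖s‖ * a ^ (-s.re - 1) * ((n : ℝ) + 1) ^ (-s.re - 1) := by
  have hx : 0 < (n : ℝ) + a := by positivity
  have hmvt := norm_ofReal_cpow_neg_sub_le hx (by linarith : (n : ℝ) + a ≤ n + 1 - a) hs
  push_cast at hmvt
  simp only [Complex.cpow_neg, ← one_div] at hmvt
  have hshift : ((n : ℝ) + a) ^ (-s.re - 1) ≤ a ^ (-s.re - 1) * ((n : ℝ) + 1) ^ (-s.re - 1) := by
    rw [← Real.mul_rpow ha.le (by positivity)]
    exact Real.rpow_le_rpow_of_nonpos (by positivity) (by nlinarith) (by linarith)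
  rw [norm_div, Complex.norm_ofNat, div_le_iff₀ two_pos]
  calc _ ≤ ‖s‖ * ((n : ℝ) + a) ^ (-s.re - 1) * (n + 1 - a - (n + a)) := hmvt
    _ ≤ ‖s‖ * (a ^ (-s.re - 1) * ((n : ℝ) + 1) ^ (-s.re - 1)) * 2 := by
      rw [mul_assoc, mul_assoc]
      gcongr ‖s‖ * ?_
      exact mul_le_mul hshift (by linarith) (by linarith) (by positivity)
    _ = _ := by ring

theorem hasSum_hurwitzZetaOdd_of_re_pos {a : ℝ} (ha : 0 < a) (ha' : a ≤ 1 / 2) {s : ℂ}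
    (hs : 0 < s.re) :
    HasSum (fun n : ℕ => (1 / ((n : ℂ) + a) ^ s - 1 / ((n : ℂ) + 1 - a) ^ s) / 2)
      (hurwitzZetaOdd a s) := by
  have hsummable :
      Summable (fun n : ℕ => (1 / ((n : ℂ) + a) ^ s - 1 / ((n : ℂ) + 1 - a) ^ s) / 2) :=
    .of_norm_bounded ((summable_nat_add_one_rpow (by linarith : -s.re - 1 < -1)).mul_left
      (‖s‖ * a ^ (-s.re - 1))) fun n => norm_hurwitzZetaOdd_term_le ha ha' hs.le n
  have hdiff : ∀ c : ℂ, c ≠ 0 → Differentiable ℂ (fun z : ℂ => 1 / c ^ z) := fun c hc z =>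
    (differentiableAt_const 1).div (differentiableAt_id.const_cpow (Or.inl hc))
      (by simp [Complex.cpow_eq_zero_iff, hc])
  have hne : ∀ n : ℕ, (n : ℂ) + a ≠ 0 ∧ (n : ℂ) + 1 - a ≠ 0 := fun n => by
    constructor <;> intro h <;> have := congrArg Complex.re h <;>
      simp only [Complex.add_re, Complex.sub_re, Complex.natCast_re, Complex.ofReal_re,
        Complex.one_re, Complex.zero_re] at this <;> linarith [n.cast_nonneg (α := ℝ)]
  have hcont : ContinuousOn (fun z : ℂ => ‖z‖ * a ^ (-z.re - 1)) {z | 0 < z.re} :=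
    (continuous_norm.mul (continuous_const.rpow (by fun_prop) fun _ => Or.inl ha.ne')).continuousOn
  have heq := eqOn_re_gt_of_eqOn_re_gt (τ := 1)
    (differentiableOn_tsum_of_norm_le_mul_rpow
      (fun n => (((hdiff _ (hne n).1).sub (hdiff _ (hne n).2)).div_const 2).differentiableOn)
      hcont fun n z hz => norm_hurwitzZetaOdd_term_le ha ha' hz.le n)
    (differentiable_hurwitzZetaOdd a).differentiableOn
    fun z hz => (hasSum_nat_hurwitzZetaOdd_of_mem_Icc ⟨ha.le, by linarith⟩ hz).tsum_eq
  exact heq hs ▸ hsummable.hasSum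

theorem tendsto_sum_sin_mul_cpow_sinZeta {a : ℝ} (ha : 0 < a) (ha1 : a < 1) {w : ℂ}
    (hw : 0 < w.re) :
    Tendsto (fun N => ∑ n ∈ range N, (Real.sin ((n + 1) * (2 * π * a)) : ℂ) * ((n : ℂ) + 1) ^ (-w))
      atTop (𝓝 (sinZeta a w)) := by
  set c : ℕ → ℂ := fun n => (Real.sin ((n + 1) * (2 * π * a)) : ℂ)
  obtain ⟨C, hC⟩ := exists_abs_sum_sin_le (θ := 2 * π * a) (by positivity) (by nlinarith [pi_pos])
  have hc : ∀ N, ‖∑ i ∈ range N, c i‖ ≤ C := fun N => by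
    simpa only [c, ← Complex.ofReal_sum, Complex.norm_real, Real.norm_eq_abs] using hC N
  suffices dirichletSeriesByParts c w = sinZeta a w from
    this ▸ tendsto_sum_mul_cpow_dirichletSeriesByParts hc hw
  refine eqOn_re_gt_of_eqOn_re_gt (τ := 1) (differentiableOn_dirichletSeriesByParts hc)
    (differentiableAt_sinZeta a).differentiableOn (fun z hz => ?_) hw
  refine tendsto_nhds_unique (tendsto_sum_mul_cpow_dirichletSeriesByParts hc (by linarith)) ?_
  have hsin := ((hasSum_nat_sinZeta a hz).tendsto_sum_nat).comp (tendsto_add_atTop_nat 1)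
  refine hsin.congr fun N => ?_
  simp only [Function.comp_apply, sum_range_succ', c]
  push_cast
  simp [Complex.cpow_neg, div_eq_mul_inv, mul_comm]

theorem hasSum_one_div_rpow_sub_hurwitzZetaOdd_re {a : ℝ} (ha : 0 < a) (ha' : a ≤ 1 / 2)
    {s : ℝ} (hs : 0 < s) :
    HasSum (fun n : ℕ => (1 / ((n : ℝ) + a) ^ s - 1 / ((n : ℝ) + 1 - a) ^ s) / 2)
      (hurwitzZetaOdd a s).re := by
  refine ((hasSum_hurwitzZetaOdd_of_re_pos ha ha' (by simpa using hs)).mapL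
    Complex.reCLM).congr_fun fun n => ?_
  have h1 : 0 ≤ (n : ℝ) + a := by positivity
  have h2 : 0 ≤ (n : ℝ) + 1 - a := by linarith [n.cast_nonneg (α := ℝ)]
  simp only [Complex.reCLM_apply]
  rw [← Complex.ofReal_re ((1 / ((n : ℝ) + a) ^ s - 1 / ((n : ℝ) + 1 - a) ^ s) / 2)]
  push_cast [Complex.ofReal_cpow h1, Complex.ofReal_cpow h2]
  rfl

theorem tendsto_sum_sin_div_rpow_sinZeta_re {a : ℝ} (ha : 0 < a) (ha1 : a < 1) {w : ℝ}
    (hw : 0 < w) :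
    Tendsto (fun N => ∑ n ∈ range N, Real.sin ((n + 1) * (2 * π * a)) / ((n : ℝ) + 1) ^ w)
      atTop (𝓝 (sinZeta a w).re) := by
  refine ((Complex.continuous_re.tendsto _).comp
    (tendsto_sum_sin_mul_cpow_sinZeta ha ha1 (w := w) (by simpa using hw))).congr fun N => ?_
  have h1 : ∀ n : ℕ, 0 ≤ (n : ℝ) + 1 := fun n => by positivity
  rw [Function.comp_apply, Complex.re_sum]
  refine sum_congr rfl fun n _ => ?_
  rw [← Complex.ofReal_re (Real.sin ((n + 1) * (2 * π * a)) / ((n : ℝ) + 1) ^ w)]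
  push_cast [Complex.ofReal_cpow (h1 n), Complex.cpow_neg, div_eq_mul_inv]
  rfl

theorem sinZeta_one_sub_re (a : ℝ) {s : ℝ} (hs : ∀ n : ℕ, s ≠ -n) :
    (sinZeta a (1 - s)).re
      = 2 * (2 * π) ^ (-s) * Real.Gamma s * Real.sin (π * s / 2) * (hurwitzZetaOdd a s).re := by
  have hreal : 2 * (2 * (π : ℂ)) ^ (-(s : ℂ)) * Complex.Gamma s * Complex.sin (π * s / 2)
      = ((2 * (2 * π) ^ (-s) * Real.Gamma s * Real.sin (π * s / 2) : ℝ) : ℂ) := by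
    push_cast [Complex.ofReal_cpow (by positivity : 0 ≤ 2 * π), Complex.Gamma_ofReal]
    rfl
  rw [sinZeta_one_sub a (s := s) fun n h => hs n (by exact_mod_cast h), hreal,
    Complex.re_ofReal_mul]

theorem hasSum_one_div_rpow_sub_one_div_rpow {k l : ℝ} (hk : 0 < k) (hkl : k < l) {s : ℝ}
    (hs : 0 < s) :
    HasSum (fun n : ℕ => 1 / ((2 * n + 1) * l - k) ^ s - 1 / ((2 * n + 1) * l + k) ^ s)
      (2 * (2 * l) ^ (-s) * (hurwitzZetaOdd ((l - k) / (2 * l) : ℝ) s).re) := by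
  have hl : 0 < l := hk.trans hkl
  set a := (l - k) / (2 * l) with ha_def
  have ha : 0 < a := div_pos (by linarith) (by positivity)
  have ha' : a ≤ 1 / 2 := by rw [div_le_iff₀ (by positivity)]; linarith
  refine ((hasSum_one_div_rpow_sub_hurwitzZetaOdd_re ha ha' hs).mul_left _).congr_fun fun n => ?_
  have h1 : 0 ≤ (n : ℝ) + a := by positivity
  have h2 : 0 ≤ (n : ℝ) + 1 - a := by linarith [n.cast_nonneg (α := ℝ)]
  rw [show (2 * n + 1) * l - k = 2 * l * (n + a) by rw [ha_def]; field_simp; ring,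
    show (2 * n + 1) * l + k = 2 * l * (n + 1 - a) by rw [ha_def]; field_simp; ring,
    Real.mul_rpow (by positivity) h1, Real.mul_rpow (by positivity) h2,
    Real.rpow_neg (by positivity)]
  field_simp

theorem tendsto_sum_neg_one_pow_mul_sin_div_rpow {k l : ℝ} (hk : 0 < k) (hkl : k < l) {w : ℝ}
    (hw : 0 < w) :
    Tendsto (fun N => ∑ n ∈ range N, (-1 : ℝ) ^ n * Real.sin ((n + 1) * k * π / l) / (n + 1) ^ w)
      atTop (𝓝 (sinZeta ((l - k) / (2 * l) : ℝ) w).re) := by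
  have hl : 0 < l := hk.trans hkl
  refine (tendsto_sum_sin_div_rpow_sinZeta_re (div_pos (by linarith) (by positivity))
    (by rw [div_lt_one (by positivity)]; linarith) hw).congr fun N => sum_congr rfl fun n _ => ?_
  rw [show (n + 1) * (2 * π * ((l - k) / (2 * l))) = ((n + 1 : ℕ) : ℝ) * π - (n + 1) * k * π / l by
    field_simp; push_cast; ring, Real.sin_nat_mul_pi_sub, pow_succ]
  ring

/-- Malmstén's functional equation (first form). -/
theorem malmsten_functional_equation_one
    (k l : ℕ) (hk : 0 < k) (hkl : k < l) (s : ℝ) (hs0 : 0 < s) (hs1 : s < 1) :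
    Summable (fun n : ℕ =>
        1 / ((2 * (n : ℝ) + 1) * l - k) ^ s - 1 / ((2 * (n : ℝ) + 1) * l + k) ^ s) ∧
    ∃ R : ℝ,
      Tendsto (fun N : ℕ => ∑ n ∈ Finset.range N,
          (-1 : ℝ) ^ n * Real.sin ((n + 1) * k * π / l) / ((n : ℝ) + 1) ^ (1 - s))
        atTop (nhds R) ∧
      (∑' n : ℕ,
          (1 / ((2 * (n : ℝ) + 1) * l - k) ^ s - 1 / ((2 * (n : ℝ) + 1) * l + k) ^ s))
        = (π / l) ^ s / (Real.sin (s * π / 2) * Real.Gamma s) * R := by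
  have hk' : (0 : ℝ) < k := by exact_mod_cast hk
  have hkl' : (k : ℝ) < l := by exact_mod_cast hkl
  have hl : (0 : ℝ) < l := hk'.trans hkl'
  have hlhs := hasSum_one_div_rpow_sub_one_div_rpow hk' hkl' hs0
  refine ⟨hlhs.summable, _, tendsto_sum_neg_one_pow_mul_sin_div_rpow hk' hkl' (by linarith), ?_⟩
  rw [hlhs.tsum_eq, Complex.ofReal_sub, Complex.ofReal_one, sinZeta_one_sub_re _
    fun n => by linarith [n.cast_nonneg (α := ℝ)]]
  have hΓ : Real.Gamma s ≠ 0 := (Real.Gamma_pos_of_pos hs0).ne'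
  have hsin_pos : 0 < Real.sin (s * π / 2) :=
    Real.sin_pos_of_pos_of_lt_pi (by positivity) (by nlinarith [pi_pos])
  rw [mul_comm π s, Real.div_rpow pi_pos.le hl.le, Real.rpow_neg (by positivity),
    Real.rpow_neg (by positivity), Real.mul_rpow (by norm_num) hl.le,
    Real.mul_rpow (by norm_num) pi_pos.le]
  field_simp
end

section
/- Let s be a real number with 0 < s < 1. Then η(1 − s) = ((2^s − 1)/(1 − 2^{s−1})) · π^{−s} · cos(sπ/2) · Γ(s) · η(s), where η(t) = Σ_{n=1}^∞ (-1)^{n+1}/n^t denotes the Dirichlet eta function (the series converges for every real t > 0). -/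
/-!
Pairing consecutive terms, `η z = ∑ₖ ((2k+1)^(-z) - (2k+2)^(-z))`; by the mean value theorem the
`k`-th pair is `O(‖z‖ k^(-re z - 1))`, so the series converges locally uniformly on `re z > 0` and
is holomorphic there. For `re z > 1`, splitting `ζ` into odd and even terms gives
`η z = (1 - 2^(1-z)) ζ z`, and the identity theorem on the connected set `{re z > 0} \ {1}`
extends this to the whole region. The functional equation of `ζ` then turns into that of `η` on
the critical strip. For real `s > 0` the paired sum is the limit of the even alternating partial
sums, and the alternating series test gives convergence of all of them.
-/

open Real Filter Finset

open Complex in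
theorem norm_ofReal_cpow_neg_sub_le_s11 {a b : ℝ} (ha : 0 < a) (hab : a ≤ b) {z : ℂ}
    (hz : -1 ≤ z.re) :
    ‖(a : ℂ) ^ (-z) - (b : ℂ) ^ (-z)‖ ≤ ‖z‖ * a ^ (-z.re - 1) * (b - a) := by
  have hderiv : ∀ x ∈ Set.Icc a b,
      HasDerivWithinAt (fun x : ℝ => (x : ℂ) ^ (-z)) (-z * (x : ℂ) ^ (-z - 1)) (Set.Icc a b) x :=
    fun x hx => ((hasStrictDerivAt_cpow_const (ofReal_mem_slitPlane.2 (ha.trans_le hx.1))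
      ).hasDerivAt.comp_ofReal).hasDerivWithinAt
  have hbound : ∀ x ∈ Set.Icc a b, ‖-z * (x : ℂ) ^ (-z - 1)‖ ≤ ‖z‖ * a ^ (-z.re - 1) := by
    intro x hx
    rw [norm_mul, norm_neg, norm_cpow_eq_rpow_re_of_pos (ha.trans_le hx.1)]
    gcongr
    simpa using Real.rpow_le_rpow_of_nonpos ha hx.1 (by linarith)
  have := (convex_Icc a b).norm_image_sub_le_of_norm_hasDerivWithin_le hderiv hbound
    (Set.left_mem_Icc.2 hab) (Set.right_mem_Icc.2 hab)
  rwa [norm_sub_rev, Real.norm_of_nonneg (sub_nonneg.2 hab)] at this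

noncomputable def etaPairTerm (k : ℕ) (z : ℂ) : ℂ :=
  (2 * k + 1 : ℂ) ^ (-z) - (2 * k + 2 : ℂ) ^ (-z)

-- The paired form of `∑ (-1)^(n+1) n^(-z)`; it converges for `0 < re z`.
noncomputable def dirichletEta (z : ℂ) : ℂ := ∑' k, etaPairTerm k z

theorem norm_etaPairTerm_le (k : ℕ) {z : ℂ} (hz : -1 ≤ z.re) :
    ‖etaPairTerm k z‖ ≤ ‖z‖ * (2 * k + 1 : ℝ) ^ (-z.re - 1) := by
  have h := norm_ofReal_cpow_neg_sub_le_s11 (a := 2 * k + 1) (b := 2 * k + 2) (by positivity)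
    (by linarith) hz
  rw [show (2 * k + 2 : ℝ) - (2 * k + 1) = 1 by ring, mul_one] at h
  simpa [etaPairTerm] using h

theorem summable_two_mul_add_one_rpow {e : ℝ} (he : e < -1) :
    Summable fun k : ℕ => (2 * k + 1 : ℝ) ^ e := by
  have hshift : Summable fun k : ℕ => ((k + 1 : ℕ) : ℝ) ^ e :=
    (summable_nat_add_iff 1).2 (Real.summable_nat_rpow.2 he)
  refine hshift.of_nonneg_of_le (fun k => by positivity) fun k => ?_
  exact Real.rpow_le_rpow_of_nonpos (by positivity) (by push_cast; linarith) (by linarith)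

theorem differentiable_etaPairTerm (k : ℕ) : Differentiable ℂ (etaPairTerm k) := by
  have h1 : (2 * k + 1 : ℂ) ≠ 0 := by exact_mod_cast Nat.succ_ne_zero (2 * k)
  have h2 : (2 * k + 2 : ℂ) ≠ 0 := by exact_mod_cast Nat.succ_ne_zero (2 * k + 1)
  exact (differentiable_neg.const_cpow (Or.inl h1)).sub
    (differentiable_neg.const_cpow (Or.inl h2))

theorem differentiableOn_dirichletEta : DifferentiableOn ℂ dirichletEta {z | 0 < z.re} := by
  intro z (hz : 0 < z.re)
  refine DifferentiableAt.differentiableWithinAt ?_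
  set ε := z.re / 2
  set R := ‖z‖ + 1
  set U := {w : ℂ | ε < w.re} ∩ Metric.ball 0 R
  have hε : 0 < ε := half_pos hz
  have hU : IsOpen U :=
    (isOpen_lt continuous_const Complex.continuous_re).inter Metric.isOpen_ball
  have hzU : z ∈ U := ⟨half_lt_self hz, by simp [R]⟩
  have hbound (k : ℕ) (w : ℂ) (hw : w ∈ U) :
      ‖etaPairTerm k w‖ ≤ R * (2 * k + 1 : ℝ) ^ (-ε - 1) := by
    have hεw : ε < w.re := hw.1
    have hR : ‖w‖ < R := by simpa using hw.2
    refine (norm_etaPairTerm_le k (by linarith)).trans ?_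
    gcongr
    exact le_add_of_nonneg_left (by positivity)
  exact (Complex.differentiableOn_tsum_of_summable_norm
    ((summable_two_mul_add_one_rpow (by linarith)).mul_left R)
    (fun k => (differentiable_etaPairTerm k).differentiableOn) hU hbound).differentiableAt
    (hU.mem_nhds hzU)

theorem dirichletEta_eq_one_sub_two_cpow_mul_riemannZeta_of_one_lt_re {z : ℂ} (hz : 1 < z.re) :
    dirichletEta z = (1 - 2 ^ (1 - z)) * riemannZeta z := by
  set f : ℕ → ℂ := fun n => (n + 1 : ℂ) ^ (-z)
  have hf : HasSum f (riemannZeta z) := by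
    have hs : Summable f := by
      simpa [f, Complex.cpow_neg] using
        (summable_nat_add_iff 1).2 (Complex.summable_one_div_nat_cpow.2 hz)
    convert hs.hasSum using 1
    simp [zeta_eq_tsum_one_div_nat_add_one_cpow hz, f, Complex.cpow_neg]
  have hodd : HasSum (fun k => f (2 * k + 1)) (2 ^ (-z) * riemannZeta z) := by
    refine (hf.mul_left (2 ^ (-z))).congr_fun fun k => ?_
    have := Complex.natCast_mul_natCast_cpow 2 (k + 1) (-z)
    push_cast at this
    simp only [f, ← this]
    push_cast
    ring_nf
  have heven : HasSum (fun k => f (2 * k)) (riemannZeta z - 2 ^ (-z) * riemannZeta z) := by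
    have hs := hf.summable.comp_injective (mul_right_injective₀ (two_ne_zero (α := ℕ)))
    rw [← eq_sub_of_add_eq (hf.unique (hs.hasSum.even_add_odd hodd)).symm]
    exact hs.hasSum
  have hpair : HasSum (fun k => etaPairTerm k z)
      (riemannZeta z - 2 ^ (-z) * riemannZeta z - 2 ^ (-z) * riemannZeta z) := by
    refine (heven.sub hodd).congr_fun fun k => ?_
    simp only [etaPairTerm, f]
    push_cast
    ring_nf
  rw [dirichletEta, hpair.tsum_eq, sub_eq_add_neg (1 : ℂ) z,
    Complex.cpow_add _ _ two_ne_zero, Complex.cpow_one]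
  ring

theorem isPreconnected_re_pos_diff_one : IsPreconnected ({z : ℂ | 0 < z.re} \ {1}) := by
  have hlin (c : ℝ) : IsLinearMap ℝ fun w : ℂ => w.re + c * w.im :=
    ⟨fun x y => by simp; ring, fun a x => by simp; ring⟩
  have hconv (c : ℝ) : Convex ℝ ({w : ℂ | 0 < w.re} ∩ {w | w.re + c * w.im < 1}) :=
    (convex_halfSpace_re_gt 0).inter (convex_halfSpace_lt (hlin c) 1)
  have hsplit : {z : ℂ | 0 < z.re} \ {1} = ({w : ℂ | 0 < w.re} ∩ {w | w.re + -1 * w.im < 1}) ∪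
      {w : ℂ | 1 < w.re} ∪ ({w : ℂ | 0 < w.re} ∩ {w | w.re + 1 * w.im < 1}) := by
    ext w
    simp only [Set.mem_sdiff, Set.mem_union, Set.mem_inter_iff, Set.mem_ofPred_eq,
      Set.mem_singleton_iff, Complex.ext_iff, Complex.one_re, Complex.one_im]
    constructor
    · rintro ⟨hre, hne⟩
      by_contra! h
      obtain ⟨⟨h₁, h₂⟩, h₃⟩ := h
      exact hne ⟨by linarith [h₁ hre, h₃ hre], by linarith [h₁ hre, h₃ hre]⟩
    · rintro ((⟨h0, h1⟩ | h) | ⟨h0, h1⟩) <;>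
        refine ⟨by linarith, fun ⟨h2, h3⟩ => ?_⟩ <;> linarith
  rw [hsplit]
  exact (((hconv (-1)).isPreconnected.union (2 + 2 * Complex.I) (by norm_num) (by simp)
    (convex_halfSpace_re_gt 1).isPreconnected).union (2 - 2 * Complex.I) (Or.inr (by simp))
    (by norm_num) (hconv 1).isPreconnected)

theorem dirichletEta_eq_one_sub_two_cpow_mul_riemannZeta {z : ℂ} (hz : 0 < z.re)
    (hz1 : z ≠ 1) :
    dirichletEta z = (1 - 2 ^ (1 - z)) * riemannZeta z := by
  have hU : IsOpen ({w : ℂ | 0 < w.re} \ {1}) :=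
    (isOpen_lt continuous_const Complex.continuous_re).sdiff isClosed_singleton
  have hη : AnalyticOnNhd ℂ dirichletEta ({w : ℂ | 0 < w.re} \ {1}) :=
    (differentiableOn_dirichletEta.mono Set.sdiff_subset).analyticOnNhd hU
  have hζ : AnalyticOnNhd ℂ (fun w => (1 - 2 ^ (1 - w)) * riemannZeta w)
      ({w : ℂ | 0 < w.re} \ {1}) :=
    DifferentiableOn.analyticOnNhd (fun w hw => DifferentiableAt.differentiableWithinAt <|
      ((differentiableAt_const _).sub (((differentiableAt_const _).sub
        differentiableAt_id).const_cpow (Or.inl two_ne_zero))).mul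
      (differentiableAt_riemannZeta hw.2)) hU
  have htwo : (2 : ℂ) ∈ {w : ℂ | 0 < w.re} \ {1} := by norm_num
  have hnear : dirichletEta =ᶠ[nhds 2] fun w => (1 - 2 ^ (1 - w)) * riemannZeta w :=
    Filter.eventually_of_mem ((isOpen_lt continuous_const Complex.continuous_re).mem_nhds
      (by norm_num : (1 : ℝ) < (2 : ℂ).re))
      fun w hw => dirichletEta_eq_one_sub_two_cpow_mul_riemannZeta_of_one_lt_re hw
  exact hη.eqOn_of_preconnected_of_eventuallyEq hζ isPreconnected_re_pos_diff_one htwo hnear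
    ⟨hz, hz1⟩

theorem dirichletEta_one_sub {s : ℂ} (hs0 : 0 < s.re) (hs1 : s.re < 1) :
    dirichletEta (1 - s) = (2 ^ s - 1) / (1 - 2 ^ (s - 1)) * π ^ (-s) *
      Complex.cos (s * π / 2) * Complex.Gamma s * dirichletEta s := by
  have hs_ne : s ≠ 1 := fun h => by simp [h] at hs1
  have hη₁ := dirichletEta_eq_one_sub_two_cpow_mul_riemannZeta (z := 1 - s) (by simpa using hs1)
    (fun h => by simp [sub_eq_self.1 h] at hs0)
  have hη := dirichletEta_eq_one_sub_two_cpow_mul_riemannZeta hs0 hs_ne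
  have hζ := riemannZeta_one_sub
    (fun n h => by simp [h] at hs0; linarith [n.cast_nonneg (α := ℝ)]) hs_ne
  have hx0 : (2 : ℂ) ^ s ≠ 0 := Complex.cpow_ne_zero_iff.2 (Or.inl two_ne_zero)
  have hx2 : (2 : ℂ) - 2 ^ s ≠ 0 := by
    refine sub_ne_zero.2 fun h => ?_
    have hnorm : ‖(2 : ℂ) ^ s‖ = (2 : ℝ) ^ s.re := by
      simpa using Complex.norm_cpow_eq_rpow_re_of_pos two_pos s
    rw [← h, Complex.norm_two] at hnorm
    have := Real.rpow_lt_rpow_of_exponent_lt one_lt_two hs1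
    rw [Real.rpow_one, ← hnorm] at this
    exact this.false
  have h2mul : (2 * π : ℂ) ^ (-s) = ((2 : ℂ) ^ s)⁻¹ * π ^ (-s) := by
    rw [← Complex.cpow_neg, ← Complex.ofReal_ofNat 2,
      Complex.mul_cpow_ofReal_nonneg two_pos.le pi_pos.le]
  rw [hη₁, hη, hζ, sub_sub_cancel, Complex.cpow_sub _ _ two_ne_zero,
    Complex.cpow_sub _ _ two_ne_zero, Complex.cpow_one, h2mul, mul_comm (π : ℂ) s]
  generalize (2 : ℂ) ^ s = x at *
  field_simp
  ring

theorem etaPairTerm_ofReal (k : ℕ) (t : ℝ) :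
    etaPairTerm k t = (((2 * k + 1 : ℝ) ^ (-t) - (2 * k + 2 : ℝ) ^ (-t) : ℝ) : ℂ) := by
  rw [Complex.ofReal_sub, Complex.ofReal_cpow (by positivity),
    Complex.ofReal_cpow (by positivity)]
  push_cast
  rfl

theorem ofReal_sum_range_two_mul_alternating (t : ℝ) (M : ℕ) :
    ((∑ n ∈ range (2 * M), (-1 : ℝ) ^ n / ((n : ℝ) + 1) ^ t : ℝ) : ℂ) =
      ∑ k ∈ range M, etaPairTerm k t := by
  induction M with
  | zero => simp
  | succ M ih =>
    rw [Nat.mul_succ, Finset.sum_range_succ, Finset.sum_range_succ, Complex.ofReal_add,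
      Complex.ofReal_add, ih, Finset.sum_range_succ, etaPairTerm_ofReal, add_assoc,
      (even_two_mul M).neg_one_pow, (even_two_mul M).add_one.neg_one_pow,
      Real.rpow_neg (by positivity), Real.rpow_neg (by positivity)]
    push_cast
    ring_nf

theorem exists_tendsto_alternating_sum_eq_dirichletEta {t : ℝ} (ht : 0 < t) :
    ∃ l : ℝ, Tendsto (fun N : ℕ => ∑ n ∈ range N, (-1 : ℝ) ^ n / ((n : ℝ) + 1) ^ t) atTop
      (nhds l) ∧ dirichletEta t = l := by
  have hanti : Antitone fun n : ℕ => ((n : ℝ) + 1) ^ (-t) := fun a b hab =>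
    Real.rpow_le_rpow_of_nonpos (by positivity) (by gcongr) (by linarith)
  have hzero : Tendsto (fun n : ℕ => ((n : ℝ) + 1) ^ (-t)) atTop (nhds 0) :=
    (tendsto_rpow_neg_atTop ht).comp
      (tendsto_atTop_add_const_right _ 1 tendsto_natCast_atTop_atTop)
  obtain ⟨l, hl⟩ := hanti.tendsto_alternating_series_of_tendsto_zero hzero
  simp only [Real.rpow_neg (Nat.cast_add_one_pos _).le, ← div_eq_mul_inv] at hl
  have hsum : Summable fun k => etaPairTerm k t :=
    ((summable_two_mul_add_one_rpow (e := -t - 1) (by linarith)).mul_left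
      ‖(t : ℂ)‖).of_norm_bounded
      fun k => by simpa using norm_etaPairTerm_le k (z := t) (by simp; linarith)
  refine ⟨l, hl, tendsto_nhds_unique hsum.hasSum.tendsto_sum_nat ?_⟩
  simp_rw [← ofReal_sum_range_two_mul_alternating]
  exact (Complex.continuous_ofReal.tendsto l).comp
    (hl.comp (tendsto_id.const_mul_atTop' two_pos))

/-- Functional equation of the Dirichlet eta function
`η(1-s) = ((2^s - 1)/(1 - 2^{s-1})) π^{-s} cos(sπ/2) Γ(s) η(s)`,
where `η(t) = Σ_{n=1}^∞ (-1)^{n+1}/n^t` (convergent for `t > 0`). -/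
theorem eta_functional_equation (s : ℝ) (hs0 : 0 < s) (hs1 : s < 1) :
    ∃ eta_one_sub_s eta_s : ℝ,
      Tendsto (fun N : ℕ => ∑ n ∈ Finset.range N, (-1 : ℝ) ^ n / ((n : ℝ) + 1) ^ (1 - s))
        atTop (nhds eta_one_sub_s) ∧
      Tendsto (fun N : ℕ => ∑ n ∈ Finset.range N, (-1 : ℝ) ^ n / ((n : ℝ) + 1) ^ s)
        atTop (nhds eta_s) ∧
      eta_one_sub_s =
        (2 ^ s - 1) / (1 - 2 ^ (s - 1)) * π ^ (-s) * Real.cos (s * π / 2) *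
          Real.Gamma s * eta_s := by
  obtain ⟨η₁, hη₁, hη₁_eq⟩ :=
    exists_tendsto_alternating_sum_eq_dirichletEta (t := 1 - s) (by linarith)
  obtain ⟨η₀, hη₀, hη₀_eq⟩ := exists_tendsto_alternating_sum_eq_dirichletEta hs0
  refine ⟨η₁, η₀, hη₁, hη₀, Complex.ofReal_injective ?_⟩
  rw [Complex.ofReal_sub, Complex.ofReal_one] at hη₁_eq
  push_cast [Complex.ofReal_cpow two_pos.le, Complex.ofReal_cpow pi_pos.le]
  rw [← hη₁_eq, ← hη₀_eq, dirichletEta_one_sub (by simpa) (by simpa), Complex.Gamma_ofReal]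
end

section
/- Let n > 0 be a real number. Then ∫_0^1 ln(ln(1/y)) · y^{n−1} dy = −(γ + ln(n))/n, where γ is the Euler–Mascheroni constant. -/
/-!
Substituting `y = exp (-t)` turns the integral into `∫_0^∞ log t · exp (-n t) dt`, and the
rescaling `t = u / n` reduces this to `(∫_0^∞ log u · exp (-u) du - log n) / n`. The remaining
integral is `Γ'(1) = -γ`, by differentiating the Gamma integral under the integral sign.
-/

open Real MeasureTheory Set

local notation "γ" => Real.eulerMascheroniConstant

theorem integral_log_mul_exp_neg :
    ∫ t in Ioi (0 : ℝ), log t * exp (-t) = -γ := by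
  have hGamma : HasDerivAt Complex.GammaIntegral (-(γ : ℂ)) 1 := by
    refine Complex.hasDerivAt_Gamma_one.congr_of_eventuallyEq ?_
    filter_upwards [(isOpen_lt continuous_const Complex.continuous_re).mem_nhds
      (by norm_num : (0 : ℝ) < (1 : ℂ).re)] with s hs
    exact (Complex.Gamma_eq_integral hs).symm
  have hint : ∫ t : ℝ in Ioi 0, (t : ℂ) ^ ((1 : ℂ) - 1) * (log t * exp (-t))
      = ((∫ t in Ioi (0 : ℝ), log t * exp (-t) : ℝ) : ℂ) := by
    simp only [sub_self, Complex.cpow_zero, one_mul, ← Complex.ofReal_mul]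
    exact integral_ofReal
  exact_mod_cast hint ▸ (Complex.hasDerivAt_GammaIntegral one_pos).unique hGamma

-- The Bochner integral of a non-integrable function is `0`, and `-γ ≠ 0`.
theorem integrableOn_log_mul_exp_neg :
    IntegrableOn (fun t : ℝ => log t * exp (-t)) (Ioi 0) :=
  Integrable.of_integral_ne_zero <| by
    rw [integral_log_mul_exp_neg, neg_ne_zero]
    exact (one_half_pos.trans one_half_lt_eulerMascheroniConstant).ne'

theorem log_mul_exp_neg_mul_eq_comp_mul {n t : ℝ} (hn : 0 < n) (ht : 0 < t) :
    log t * exp (-(n * t)) = (log (n * t) - log n) * exp (-(n * t)) := by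
  rw [log_mul hn.ne' ht.ne', add_sub_cancel_left]

theorem integrableOn_log_mul_exp_neg_mul {n : ℝ} (hn : 0 < n) :
    IntegrableOn (fun t : ℝ => log t * exp (-(n * t))) (Ioi 0) := by
  have h : IntegrableOn (fun u : ℝ => (log u - log n) * exp (-u)) (Ioi (n * 0)) := by
    simp_rw [mul_zero, sub_mul]
    exact integrableOn_log_mul_exp_neg.sub
      ((integrableOn_exp_neg_Ioi 0).const_mul (log n))
  exact ((integrableOn_Ioi_comp_mul_left_iff _ 0 hn).2 h).congr_fun
    (fun t ht => (log_mul_exp_neg_mul_eq_comp_mul hn ht).symm) measurableSet_Ioi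

theorem integral_log_mul_exp_neg_mul {n : ℝ} (hn : 0 < n) :
    ∫ t in Ioi (0 : ℝ), log t * exp (-(n * t)) = -((γ + log n) / n) := by
  rw [setIntegral_congr_fun measurableSet_Ioi (fun t ht => log_mul_exp_neg_mul_eq_comp_mul hn ht),
    integral_comp_mul_left_Ioi (fun u => (log u - log n) * exp (-u)) 0 hn, mul_zero]
  simp_rw [sub_mul]
  rw [integral_sub integrableOn_log_mul_exp_neg ((integrableOn_exp_neg_Ioi 0).const_mul _),
    integral_log_mul_exp_neg, integral_const_mul, integral_exp_neg_Ioi_zero, smul_eq_mul]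
  field_simp
  ring

section ExpNegSubstitution

variable {E : Type*} [NormedAddCommGroup E] [NormedSpace ℝ E]

theorem image_exp_neg_Ioi_zero : (fun t : ℝ => exp (-t)) '' Ioi 0 = Ioo 0 1 := by
  ext y
  constructor
  · rintro ⟨t, ht, rfl⟩
    exact ⟨exp_pos _, exp_lt_one_iff.2 (neg_neg_iff_pos.2 ht)⟩
  · rintro ⟨hy0, hy1⟩
    exact ⟨-log y, neg_pos.2 (log_neg hy0 hy1), by simp only [neg_neg, exp_log hy0]⟩

theorem hasDerivWithinAt_exp_neg (s : Set ℝ) (t : ℝ) :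
    HasDerivWithinAt (fun t : ℝ => exp (-t)) (-exp (-t)) s t := by
  simpa using ((hasDerivAt_neg t).exp).hasDerivWithinAt

theorem injective_exp_neg : Function.Injective fun t : ℝ => exp (-t) :=
  exp_injective.comp neg_injective

theorem intervalIntegrable_zero_one_iff_integrableOn_exp_neg_smul_comp {f : ℝ → E} :
    IntervalIntegrable f volume 0 1 ↔
      IntegrableOn (fun t => exp (-t) • f (exp (-t))) (Ioi 0) := by
  rw [intervalIntegrable_iff_integrableOn_Ioc_of_le zero_le_one,
    integrableOn_Ioc_iff_integrableOn_Ioo, ← image_exp_neg_Ioi_zero,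
    integrableOn_image_iff_integrableOn_abs_deriv_smul measurableSet_Ioi
      (fun t _ => hasDerivWithinAt_exp_neg _ t) injective_exp_neg.injOn]
  simp only [abs_neg, abs_of_pos (exp_pos _)]

theorem intervalIntegral_zero_one_eq_integral_exp_neg_smul_comp (f : ℝ → E) :
    ∫ y in (0 : ℝ)..1, f y = ∫ t in Ioi 0, exp (-t) • f (exp (-t)) := by
  rw [intervalIntegral.integral_of_le zero_le_one, integral_Ioc_eq_integral_Ioo,
    ← image_exp_neg_Ioi_zero,
    integral_image_eq_integral_abs_deriv_smul measurableSet_Ioi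
      (fun t _ => hasDerivWithinAt_exp_neg _ t) injective_exp_neg.injOn]
  simp only [abs_neg, abs_of_pos (exp_pos _)]

end ExpNegSubstitution

theorem exp_neg_mul_log_log_inv_exp_neg_mul_rpow (n t : ℝ) :
    exp (-t) * (log (log (1 / exp (-t))) * exp (-t) ^ (n - 1)) = log t * exp (-(n * t)) := by
  rw [one_div, ← exp_neg, neg_neg, log_exp, ← exp_mul, mul_left_comm, ← exp_add]
  ring_nf

/-- `∫_0^1 ln(ln(1/y)) y^{n-1} dy = -(γ + ln n)/n` for `n > 0`, where `γ` is the
Euler–Mascheroni constant. -/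
theorem integral_log_log_inv_mul_rpow (n : ℝ) (hn : 0 < n) :
    IntervalIntegrable (fun y : ℝ => Real.log (Real.log (1 / y)) * y ^ (n - 1)) volume 0 1 ∧
    ∫ y in (0 : ℝ)..1, Real.log (Real.log (1 / y)) * y ^ (n - 1)
      = -((Real.eulerMascheroniConstant + Real.log n) / n) := by
  have hsubst : (fun t : ℝ => exp (-t) • (log (log (1 / exp (-t))) * exp (-t) ^ (n - 1)))
      = fun t => log t * exp (-(n * t)) :=
    funext fun t => exp_neg_mul_log_log_inv_exp_neg_mul_rpow n t
  constructor
  · rw [intervalIntegrable_zero_one_iff_integrableOn_exp_neg_smul_comp, hsubst]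
    exact integrableOn_log_mul_exp_neg_mul hn
  · rw [intervalIntegral_zero_one_eq_integral_exp_neg_smul_comp, hsubst]
    exact integral_log_mul_exp_neg_mul hn
end

section
/- Let a and b be real numbers with a > −1 and b > −1. Then ∫_0^1 (y^a − y^b)/(1 − y²) dy = (1/2)·(ψ((b+1)/2) − ψ((a+1)/2)), where ψ is the digamma function. -/
/-!
Regularise by the factor `(1 - y²)^s`, `s > 0`. After the substitution `t = y²` each power
`y^a` becomes a Beta integrand, so the regularised integral is `(B(p, s) - B(q, s)) / 2` with
`p = (a + 1)/2`, `q = (b + 1)/2`. As `s → 0⁺` it tends to the original integral by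
dominated convergence (the integrand is `O(y^min(a,b))`, since `|y^a - y^b| = O(1 - y)`), while
`Γ(s) = Γ(s + 1)/s` turns `B(p, s) - B(q, s)` into a difference quotient at `0` of
`s ↦ Γ(p)/Γ(p + s) - Γ(q)/Γ(q + s)`, whose derivative there is `ψ(q) - ψ(p)`.
-/

open Real

/-- The digamma function `ψ(x) = Γ'(x)/Γ(x)`. -/
noncomputable def digamma (x : ℝ) : ℝ := deriv Real.Gamma x / Real.Gamma x

open MeasureTheory Set Filter Topology ProbabilityTheory

lemma ofReal_rpow_mul_one_sub_rpow {x : ℝ} (hx₀ : 0 ≤ x) (hx₁ : x ≤ 1) (α β : ℝ) :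
    ((x ^ (α - 1) * (1 - x) ^ (β - 1) : ℝ) : ℂ)
      = (x : ℂ) ^ ((α : ℂ) - 1) * (1 - (x : ℂ)) ^ ((β : ℂ) - 1) := by
  rw [Complex.ofReal_mul, Complex.ofReal_cpow hx₀, Complex.ofReal_cpow (sub_nonneg.2 hx₁)]
  push_cast
  rfl

lemma integrableOn_rpow_mul_one_sub_rpow {α β : ℝ} (hα : 0 < α) (hβ : 0 < β) :
    IntegrableOn (fun x : ℝ ↦ x ^ (α - 1) * (1 - x) ^ (β - 1)) (Ioo 0 1) := by
  have h := (Complex.betaIntegral_convergent (u := α) (v := β) (by simpa) (by simpa)).1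
  refine IntegrableOn.congr_fun (h.mono_set Ioo_subset_Ioc_self).re (fun x hx ↦ ?_)
    measurableSet_Ioo
  rw [← ofReal_rpow_mul_one_sub_rpow hx.1.le hx.2.le, RCLike.re_to_complex, Complex.ofReal_re]

lemma integral_rpow_mul_one_sub_rpow {α β : ℝ} (hα : 0 < α) (hβ : 0 < β) :
    ∫ x in Ioo (0 : ℝ) 1, x ^ (α - 1) * (1 - x) ^ (β - 1) = beta α β := by
  have h : Complex.betaIntegral α β
      = ((∫ x in (0 : ℝ)..1, x ^ (α - 1) * (1 - x) ^ (β - 1) : ℝ) : ℂ) := by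
    rw [Complex.betaIntegral, ← intervalIntegral.integral_ofReal]
    refine intervalIntegral.integral_congr fun x hx ↦ ?_
    rw [uIcc_of_le zero_le_one] at hx
    exact (ofReal_rpow_mul_one_sub_rpow hx.1 hx.2 α β).symm
  rw [beta_eq_betaIntegralReal α β hα hβ, h, Complex.ofReal_re,
    intervalIntegral.integral_of_le zero_le_one, integral_Ioc_eq_integral_Ioo]

lemma strictMonoOn_sq_Icc : StrictMonoOn (fun y : ℝ ↦ y ^ 2) (Icc 0 1) :=
  (pow_left_strictMonoOn₀ two_ne_zero).mono fun _ hy ↦ hy.1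

lemma image_sq_Ioo_zero_one : (fun y : ℝ ↦ y ^ 2) '' Ioo 0 1 = Ioo 0 1 := by
  simpa using (continuous_pow 2).continuousOn.image_Ioo_of_strictMonoOn zero_le_one
    strictMonoOn_sq_Icc

lemma hasDerivWithinAt_sq (s : Set ℝ) (y : ℝ) :
    HasDerivWithinAt (fun y : ℝ ↦ y ^ 2) (2 * y) s y := by
  simpa using (hasDerivAt_pow 2 y).hasDerivWithinAt

lemma integrableOn_Ioo_comp_sq_iff (g : ℝ → ℝ) :
    IntegrableOn (fun y ↦ 2 * y * g (y ^ 2)) (Ioo 0 1) ↔ IntegrableOn g (Ioo 0 1) := by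
  conv_rhs => rw [← image_sq_Ioo_zero_one]
  rw [integrableOn_image_iff_integrableOn_abs_deriv_smul measurableSet_Ioo
    (fun y _ ↦ hasDerivWithinAt_sq _ y) (strictMonoOn_sq_Icc.injOn.mono Ioo_subset_Icc_self)]
  refine integrableOn_congr_fun (fun y hy ↦ ?_) measurableSet_Ioo
  simp [abs_of_pos hy.1]

lemma setIntegral_Ioo_comp_sq (g : ℝ → ℝ) :
    ∫ y in Ioo (0 : ℝ) 1, 2 * y * g (y ^ 2) = ∫ t in Ioo (0 : ℝ) 1, g t := by
  conv_rhs => rw [← image_sq_Ioo_zero_one]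
  rw [integral_image_eq_integral_abs_deriv_smul measurableSet_Ioo
    (fun y _ ↦ hasDerivWithinAt_sq _ y) (strictMonoOn_sq_Icc.injOn.mono Ioo_subset_Icc_self)]
  refine setIntegral_congr_fun measurableSet_Ioo fun y hy ↦ ?_
  simp [abs_of_pos hy.1]

lemma two_mul_mul_sq_rpow {y : ℝ} (hy : 0 < y) (a s : ℝ) :
    2 * y * ((y ^ 2) ^ ((a + 1) / 2 - 1) * (1 - y ^ 2) ^ (s - 1))
      = 2 * (y ^ a * (1 - y ^ 2) ^ (s - 1)) := by
  rw [← Real.rpow_natCast_mul hy.le, show ((2 : ℕ) : ℝ) * ((a + 1) / 2 - 1) = a - 1 by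
    push_cast; ring, Real.rpow_sub_one hy.ne']
  field_simp

lemma integrableOn_rpow_mul_one_sub_sq_rpow {a s : ℝ} (ha : -1 < a) (hs : 0 < s) :
    IntegrableOn (fun y : ℝ ↦ y ^ a * (1 - y ^ 2) ^ (s - 1)) (Ioo 0 1) := by
  have h := (integrableOn_Ioo_comp_sq_iff _).2
    (integrableOn_rpow_mul_one_sub_rpow (α := (a + 1) / 2) (by linarith) hs)
  rw [IntegrableOn, ← integrable_const_mul_iff (isUnit_of_invertible (2 : ℝ))]
  exact h.congr_fun (fun y hy ↦ two_mul_mul_sq_rpow hy.1 a s) measurableSet_Ioo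

lemma integral_rpow_mul_one_sub_sq_rpow {a s : ℝ} (ha : -1 < a) (hs : 0 < s) :
    ∫ y in Ioo (0 : ℝ) 1, y ^ a * (1 - y ^ 2) ^ (s - 1) = beta ((a + 1) / 2) s / 2 := by
  have h := setIntegral_Ioo_comp_sq fun t ↦ t ^ ((a + 1) / 2 - 1) * (1 - t) ^ (s - 1)
  rw [integral_rpow_mul_one_sub_rpow (by linarith) hs,
    setIntegral_congr_fun measurableSet_Ioo fun y hy ↦ two_mul_mul_sq_rpow hy.1 a s,
    integral_const_mul] at h
  linarith

lemma one_sub_rpow_le_max_mul {y c : ℝ} (hy₀ : 0 ≤ y) (hy₁ : y ≤ 1) (hc : 0 ≤ c) :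
    1 - y ^ c ≤ max 1 c * (1 - y) := by
  rcases le_total c 1 with hc₁ | hc₁
  · have : y ≤ y ^ c := by simpa using Real.rpow_le_rpow_of_exponent_ge' hy₀ hy₁ hc hc₁
    rw [max_eq_left hc₁]
    linarith
  · have bernoulli := one_add_mul_self_le_rpow_one_add (s := y - 1) (by linarith) hc₁
    rw [add_sub_cancel] at bernoulli
    rw [max_eq_right hc₁]
    linarith

lemma abs_rpow_sub_rpow_le {y : ℝ} (hy₀ : 0 < y) (hy₁ : y ≤ 1) (a b : ℝ) :
    |y ^ a - y ^ b| ≤ max 1 |a - b| * y ^ min a b * (1 - y) := by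
  wlog hab : b ≤ a generalizing a b
  · rw [abs_sub_comm, abs_sub_comm a b, min_comm]
    exact this b a (le_of_not_ge hab)
  have hsplit : y ^ a = y ^ b * y ^ (a - b) := by rw [← Real.rpow_add hy₀, add_sub_cancel]
  have hle_one : y ^ (a - b) ≤ 1 := Real.rpow_le_one hy₀.le hy₁ (sub_nonneg.2 hab)
  rw [min_eq_right hab, abs_of_nonneg (sub_nonneg.2 hab), abs_sub_comm, hsplit, ← mul_one_sub,
    abs_of_nonneg (mul_nonneg (Real.rpow_nonneg hy₀.le b) (sub_nonneg.2 hle_one)),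
    mul_comm _ (y ^ b), mul_assoc]
  exact mul_le_mul_of_nonneg_left (one_sub_rpow_le_max_mul hy₀.le hy₁ (sub_nonneg.2 hab))
    (Real.rpow_nonneg hy₀.le b)

lemma integrableOn_rpow_sub_rpow_div_one_sub_sq {a b : ℝ} (ha : -1 < a) (hb : -1 < b) :
    IntegrableOn (fun y : ℝ ↦ (y ^ a - y ^ b) / (1 - y ^ 2)) (Ioo 0 1) := by
  have hbound : IntegrableOn (fun y : ℝ ↦ max 1 |a - b| * y ^ min a b) (Ioo 0 1) :=
    ((intervalIntegral.integrableOn_Ioo_rpow_iff zero_lt_one).2 (lt_min ha hb)).const_mul _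
  refine hbound.mono' (by fun_prop : Measurable _).aestronglyMeasurable
    (ae_restrict_of_forall_mem measurableSet_Ioo fun y ⟨hy₀, hy₁⟩ ↦ ?_)
  have hpos : 0 < 1 - y ^ 2 := by nlinarith
  rw [norm_div, Real.norm_eq_abs, Real.norm_of_nonneg hpos.le, div_le_iff₀ hpos]
  calc |y ^ a - y ^ b| ≤ max 1 |a - b| * y ^ min a b * (1 - y) :=
        abs_rpow_sub_rpow_le hy₀ hy₁.le a b
    _ ≤ max 1 |a - b| * y ^ min a b * (1 - y ^ 2) := by gcongr; nlinarith

lemma tendsto_setIntegral_mul_one_sub_sq_rpow {g : ℝ → ℝ} (hg : IntegrableOn g (Ioo 0 1)) :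
    Tendsto (fun s : ℝ ↦ ∫ y in Ioo (0 : ℝ) 1, g y * (1 - y ^ 2) ^ s) (𝓝[>] 0)
      (𝓝 (∫ y in Ioo (0 : ℝ) 1, g y)) := by
  refine tendsto_integral_filter_of_dominated_convergence (fun y ↦ ‖g y‖)
    (Eventually.of_forall fun s ↦
      hg.aestronglyMeasurable.mul (by fun_prop : Measurable _).aestronglyMeasurable) ?_ hg.norm ?_
  · filter_upwards [self_mem_nhdsWithin] with s hs
    filter_upwards [ae_restrict_mem measurableSet_Ioo] with y ⟨hy₀, hy₁⟩
    have hpos : 0 < 1 - y ^ 2 := by nlinarith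
    rw [norm_mul, Real.norm_of_nonneg (Real.rpow_nonneg hpos.le s)]
    exact mul_le_of_le_one_right (norm_nonneg _)
      (Real.rpow_le_one hpos.le (by nlinarith) (le_of_lt hs))
  · filter_upwards [ae_restrict_mem measurableSet_Ioo] with y ⟨hy₀, hy₁⟩
    have hpos : 0 < 1 - y ^ 2 := by nlinarith
    simpa using ((Real.continuousAt_const_rpow (b := 0) hpos.ne').tendsto.mono_left
      nhdsWithin_le_nhds).const_mul (g y)

lemma hasDerivAt_Gamma_div_Gamma_const_add {p : ℝ} (hp : 0 < p) :
    HasDerivAt (fun s ↦ Gamma p / Gamma (p + s)) (-digamma p) 0 := by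
  have hΓ : HasDerivAt (fun s ↦ Gamma (p + s)) (deriv Gamma p) 0 := by
    have := (differentiableOn_Gamma_Ioi.differentiableAt (Ioi_mem_nhds hp)).hasDerivAt
    exact HasDerivAt.comp_const_add p 0 (by simpa using this)
  have hΓp := (Gamma_pos_of_pos hp).ne'
  refine ((hΓ.inv (by simpa using hΓp)).const_mul (Gamma p)).congr_deriv ?_
  simp only [digamma, add_zero]
  field_simp

lemma tendsto_beta_sub_beta {p q : ℝ} (hp : 0 < p) (hq : 0 < q) :
    Tendsto (fun s ↦ beta p s - beta q s) (𝓝[>] 0) (𝓝 (digamma q - digamma p)) := by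
  have hslope : Tendsto (fun s ↦ (Gamma p / Gamma (p + s) - Gamma q / Gamma (q + s)) / s)
      (𝓝[>] 0) (𝓝 (digamma q - digamma p)) := by
    have hd := (hasDerivAt_Gamma_div_Gamma_const_add hp).sub
      (hasDerivAt_Gamma_div_Gamma_const_add hq)
    rw [hasDerivAt_iff_tendsto_slope, neg_sub_neg] at hd
    refine (hd.mono_left (nhdsWithin_mono _ fun s hs ↦ ne_of_gt hs)).congr fun s ↦ ?_
    simp [slope_def_field, div_self (Gamma_pos_of_pos hp).ne', div_self (Gamma_pos_of_pos hq).ne']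
  have hΓ : Tendsto (fun s ↦ Gamma (s + 1)) (𝓝[>] 0) (𝓝 1) := by
    have hc := (differentiableOn_Gamma_Ioi.differentiableAt (Ioi_mem_nhds one_pos)).continuousAt
    have hs : Tendsto (fun s : ℝ ↦ s + 1) (𝓝[>] 0) (𝓝 1) :=
      ((continuous_add_const 1).tendsto' 0 1 (zero_add 1)).mono_left nhdsWithin_le_nhds
    simpa [Function.comp_def] using hc.tendsto.comp hs
  refine (one_mul (digamma q - digamma p) ▸ hΓ.mul hslope).congr' ?_
  filter_upwards [self_mem_nhdsWithin] with s (hs : 0 < s)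
  rw [Gamma_add_one hs.ne', beta, beta]
  field_simp

lemma integral_rpow_sub_rpow_div_one_sub_sq_mul_rpow {a b s : ℝ} (ha : -1 < a) (hb : -1 < b)
    (hs : 0 < s) :
    ∫ y in Ioo (0 : ℝ) 1, (y ^ a - y ^ b) / (1 - y ^ 2) * (1 - y ^ 2) ^ s
      = (beta ((a + 1) / 2) s - beta ((b + 1) / 2) s) / 2 := by
  have hsplit : ∀ y ∈ Ioo (0 : ℝ) 1, (y ^ a - y ^ b) / (1 - y ^ 2) * (1 - y ^ 2) ^ s
      = y ^ a * (1 - y ^ 2) ^ (s - 1) - y ^ b * (1 - y ^ 2) ^ (s - 1) := by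
    rintro y ⟨hy₀, hy₁⟩
    rw [Real.rpow_sub_one (by nlinarith)]
    ring
  rw [setIntegral_congr_fun measurableSet_Ioo hsplit,
    integral_sub (integrableOn_rpow_mul_one_sub_sq_rpow ha hs)
      (integrableOn_rpow_mul_one_sub_sq_rpow hb hs),
    integral_rpow_mul_one_sub_sq_rpow ha hs, integral_rpow_mul_one_sub_sq_rpow hb hs]
  ring

/-- `∫_0^1 (y^a - y^b)/(1 - y²) dy = (ψ((b+1)/2) - ψ((a+1)/2))/2` for `a, b > -1`. -/
theorem integral_rpow_sub_rpow_div_one_sub_sq (a b : ℝ) (ha : -1 < a) (hb : -1 < b) :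
    ∫ y in (0 : ℝ)..1, (y ^ a - y ^ b) / (1 - y ^ 2)
      = 1 / 2 * (digamma ((b + 1) / 2) - digamma ((a + 1) / 2)) := by
  have hlim := tendsto_setIntegral_mul_one_sub_sq_rpow
    (integrableOn_rpow_sub_rpow_div_one_sub_sq ha hb)
  have hbeta : Tendsto
      (fun s : ℝ ↦ ∫ y in Ioo (0 : ℝ) 1, (y ^ a - y ^ b) / (1 - y ^ 2) * (1 - y ^ 2) ^ s)
      (𝓝[>] 0) (𝓝 (1 / 2 * (digamma ((b + 1) / 2) - digamma ((a + 1) / 2)))) := by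
    refine ((tendsto_beta_sub_beta (p := (a + 1) / 2) (q := (b + 1) / 2) (by linarith)
      (by linarith)).const_mul (1 / 2)).congr' ?_
    filter_upwards [self_mem_nhdsWithin] with s (hs : 0 < s)
    rw [integral_rpow_sub_rpow_div_one_sub_sq_mul_rpow ha hb hs]
    ring
  rw [intervalIntegral.integral_of_le zero_le_one, integral_Ioc_eq_integral_Ioo]
  exact tendsto_nhds_unique hlim hbeta
end
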